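/- arXiv:0805.4765 — 9 statements merged into one kernel-verified Lean document; each statement's English description precedes it below -/
import Mathlib

section
/- For every q ≥ 0, every i with 2 ≤ i, and every t ≥ i, the degree probabilities satisfy the first-passage decomposition P(q,i,t) = Σ_{s=t₀}^{t} f(q,i,s) · ∏_{j=s}^{t-1} (1 - (q+A)/((m+A)·j))^m for q > 0, where f(q,i,s) = Σ_{j=1}^{min(m,q)} C(m,j) · ((q-j+A)/((m+A)(s-1)))^j · (1 - (q-j+A)/((m+A)(s-1)))^{m-j} · P(q-j,i,s-1), and t₀ = i + q/m if m divides q and t₀ = i + ⌊q/m⌋ + 1 otherwise. -/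
open Finset Filter Topology

/-- first-passage decomposition of the DMS degree probabilities. -/
theorem dms_first_passage_decomposition
    (m : ℕ) (hm : 1 ≤ m) (A : ℝ) (hA : 0 < A)
    (P : ℕ → ℕ → ℕ → ℝ)
    (hP11 : ∀ q : ℕ, P q 1 1 = if q = m then 1 else 0)
    (hPii : ∀ q i : ℕ, 2 ≤ i → P q i i = if q = 0 then 1 else 0)
    (hPrec : ∀ q i t : ℕ, 1 ≤ i → i ≤ t →
      P q i (t + 1) = ∑ j ∈ Finset.Icc 0 (min m q),
        (m.choose j : ℝ) * (((q : ℝ) - (j : ℝ) + A) / ((m + A) * t)) ^ j *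
          (1 - ((q : ℝ) - (j : ℝ) + A) / ((m + A) * t)) ^ (m - j) * P (q - j) i t)
    (f : ℕ → ℕ → ℕ → ℝ)
    (hf : ∀ q i s : ℕ, f q i s = ∑ j ∈ Finset.Icc 1 (min m q),
      (m.choose j : ℝ) * (((q : ℝ) - (j : ℝ) + A) / ((m + A) * ((s : ℝ) - 1))) ^ j *
        (1 - ((q : ℝ) - (j : ℝ) + A) / ((m + A) * ((s : ℝ) - 1))) ^ (m - j) *
        P (q - j) i (s - 1)) :
    ∀ q i t : ℕ, 0 < q → 2 ≤ i → i ≤ t →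
      P q i t = ∑ s ∈ Finset.Icc (if m ∣ q then i + q / m else i + q / m + 1) t,
        f q i s * ∏ j ∈ Finset.Icc s (t - 1),
          (1 - ((q : ℝ) + A) / ((m + A) * (j : ℝ))) ^ m := by

  intro q i t hq hi hit
  have hm0 : 0 < m := hm
  set t0 := (if m ∣ q then i + q / m else i + q / m + 1) with ht0def
  -- criterion: m*(s-i) < q ↔ s < t0
  have hcrit : ∀ s : ℕ, i ≤ s → (m * (s - i) < q ↔ s < t0) := by
    intro s hs
    by_cases hd : m ∣ q
    · obtain ⟨k, rfl⟩ := hd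
      rw [ht0def, if_pos ⟨k, rfl⟩, Nat.mul_div_cancel_left k hm0,
        Nat.mul_lt_mul_left hm0]
      omega
    · rw [ht0def, if_neg hd]
      have h1 : s - i ≤ q / m ↔ (s - i) * m ≤ q := Nat.le_div_iff_mul_le hm0
      have h2 : m * (s - i) ≠ q := fun h => hd ⟨s - i, h.symm⟩
      have h3 : (s - i) * m = m * (s - i) := Nat.mul_comm _ _
      constructor
      · intro h
        have := h1.mpr (by omega)
        omega
      · intro h
        have hle : s - i ≤ q / m := by omega
        have := h1.mp hle
        omega
  -- vanishing lemma
  have hvanish : ∀ s, i ≤ s → ∀ q' : ℕ, m * (s - i) < q' → P q' i s = 0 := by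
    intro s hs
    induction s, hs using Nat.le_induction with
    | base =>
      intro q' hq'
      simp only [Nat.sub_self, Nat.mul_zero] at hq'
      rw [hPii _ _ hi, if_neg (by omega)]
    | succ n hn ih =>
      intro q' hq'
      rw [hPrec q' i n (by omega) hn]
      apply Finset.sum_eq_zero
      intro j hj
      simp only [Finset.mem_Icc] at hj
      have hj2 : j ≤ m := le_trans hj.2 (min_le_left _ _)
      have hj3 : j ≤ q' := le_trans hj.2 (min_le_right _ _)
      have hmul : m * (n + 1 - i) = m * (n - i) + m := by
        have h4 : n + 1 - i = (n - i) + 1 := by omega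
        rw [h4, Nat.mul_succ]
      have hz : P (q' - j) i n = 0 := ih (q' - j) (by omega)
      rw [hz, mul_zero]
  -- one-step recursion split
  have hstep : ∀ s : ℕ, i ≤ s → P q i (s + 1) =
      (1 - ((q : ℝ) + A) / (((m : ℝ) + A) * s)) ^ m * P q i s + f q i (s + 1) := by
    intro s hs
    rw [hPrec q i s (by omega) hs, hf]
    have h0 : Finset.Icc 0 (min m q) = insert 0 (Finset.Icc 1 (min m q)) := by
      ext x
      simp only [Finset.mem_Icc, Finset.mem_insert]
      omega
    rw [h0, Finset.sum_insert (by simp)]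
    congr 1
    · simp
    · apply Finset.sum_congr rfl
      intro j hj
      have hc : ((s + 1 : ℕ) : ℝ) - 1 = (s : ℝ) := by push_cast; ring
      rw [hc, Nat.add_sub_cancel]
  -- main induction
  induction t, hit using Nat.le_induction with
  | base =>
    rw [hPii _ _ hi, if_neg (by omega)]
    have hlt : i < t0 := (hcrit i le_rfl).mp (by simp [Nat.sub_self]; omega)
    rw [Finset.Icc_eq_empty (by omega), Finset.sum_empty]
  | succ n hn ih =>
    have key := hstep n hn
    by_cases hle : t0 ≤ n + 1
    · rw [Finset.sum_Icc_succ_top hle]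
      simp only [Nat.add_sub_cancel]
      rw [show Finset.Icc (n + 1) n = ∅ from Finset.Icc_eq_empty (by omega),
        Finset.prod_empty, mul_one, key]
      congr 1
      by_cases hle2 : t0 ≤ n
      · rw [ih, Finset.mul_sum]
        apply Finset.sum_congr rfl
        intro s hs
        simp only [Finset.mem_Icc] at hs
        have hn1 : 1 ≤ n := by omega
        have hp := Finset.prod_Icc_succ_top (show s ≤ n - 1 + 1 by omega)
          (fun j : ℕ => (1 - ((q : ℝ) + A) / (((m : ℝ) + A) * j)) ^ m)
        rw [show n - 1 + 1 = n by omega] at hp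
        rw [hp]
        ring
      · have h1 : Finset.Icc t0 n = ∅ := Finset.Icc_eq_empty (by omega)
        have h2 : P q i n = 0 := hvanish n hn q ((hcrit n hn).mpr (by omega))
        rw [h1, Finset.sum_empty, h2, mul_zero]
    · have h2 : P q i (n + 1) = 0 :=
        hvanish (n + 1) (by omega) q ((hcrit (n + 1) (by omega)).mpr (by omega))
      rw [h2, Finset.Icc_eq_empty (by omega), Finset.sum_empty]
end

section
/- For every t ≥ 2, the reduced degree distribution satisfies the recursion P̄(0,t+1) = ((t-1)/t) · P̄(0,t) · (1 - A/((m+A)·t))^m + 1/t. -/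
open Finset

-- Only the `j = 0` term survives: a vertex keeps degree `0` iff none of the `m` new edges picks it.
theorem dms_prob_deg_zero_succ {m : ℕ} {A : ℝ} {P : ℕ → ℕ → ℕ → ℝ}
    (hPrec : ∀ q i t : ℕ, 1 ≤ i → i ≤ t →
      P q i (t + 1) = ∑ j ∈ Finset.Icc 0 (min m q),
        (m.choose j : ℝ) * (((q : ℝ) - (j : ℝ) + A) / ((m + A) * t)) ^ j *
          (1 - ((q : ℝ) - (j : ℝ) + A) / ((m + A) * t)) ^ (m - j) * P (q - j) i t)
    {i t : ℕ} (hi : 1 ≤ i) (hit : i ≤ t) :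
    P 0 i (t + 1) = (1 - A / ((m + A) * t)) ^ m * P 0 i t := by
  simp [hPrec 0 i t hi hit]

theorem sum_Icc_succ_top_eq_mul_add_one {f g : ℕ → ℝ} {c : ℝ} {a t : ℕ} (hat : a ≤ t + 1)
    (hscale : ∀ i ∈ Icc a t, g i = c * f i) (htop : g (t + 1) = 1) :
    ∑ i ∈ Icc a (t + 1), g i = c * ∑ i ∈ Icc a t, f i + 1 := by
  rw [sum_Icc_succ_top hat, sum_congr rfl hscale, htop, mul_sum]

theorem dms_reduced_recursion_deg_zero_general
    (m : ℕ) (A : ℝ)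
    (P : ℕ → ℕ → ℕ → ℝ)
    (hPii : ∀ q i : ℕ, 2 ≤ i → P q i i = if q = 0 then 1 else 0)
    (hPrec : ∀ q i t : ℕ, 1 ≤ i → i ≤ t →
      P q i (t + 1) = ∑ j ∈ Finset.Icc 0 (min m q),
        (m.choose j : ℝ) * (((q : ℝ) - (j : ℝ) + A) / ((m + A) * t)) ^ j *
          (1 - ((q : ℝ) - (j : ℝ) + A) / ((m + A) * t)) ^ (m - j) * P (q - j) i t)
    (Pbar : ℕ → ℕ → ℝ)
    (hPbar : ∀ q t : ℕ, 2 ≤ t →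
      Pbar q t = (1 / ((t : ℝ) - 1)) * ∑ i ∈ Finset.Icc 2 t, P q i t) :
    ∀ t : ℕ, 2 ≤ t →
      Pbar 0 (t + 1) =
        (((t : ℝ) - 1) / (t : ℝ)) * Pbar 0 t * (1 - A / ((m + A) * t)) ^ m + 1 / (t : ℝ) := by
  intro t ht
  have hsum : ∑ i ∈ Icc 2 (t + 1), P 0 i (t + 1)
      = (1 - A / ((m + A) * t)) ^ m * ∑ i ∈ Icc 2 t, P 0 i t + 1 :=
    sum_Icc_succ_top_eq_mul_add_one (by omega)
      (fun i hi => by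
        obtain ⟨h2i, hit⟩ := mem_Icc.mp hi
        exact dms_prob_deg_zero_succ hPrec (by omega) hit)
      (by simpa using hPii 0 (t + 1) (by omega))
  have ht' : (2 : ℝ) ≤ t := by exact_mod_cast ht
  have ht0 : (t : ℝ) ≠ 0 := by linarith
  have ht1 : (t : ℝ) - 1 ≠ 0 := by linarith
  rw [hPbar 0 (t + 1) (by omega), hPbar 0 t ht, hsum]
  have hsucc : ((t + 1 : ℕ) : ℝ) - 1 = t := by push_cast; ring
  rw [hsucc]
  field_simp

/-- recursion for the reduced degree distribution at degree 0. -/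
theorem dms_reduced_recursion_deg_zero
    (m : ℕ) (hm : 1 ≤ m) (A : ℝ) (hA : 0 < A)
    (P : ℕ → ℕ → ℕ → ℝ)
    (hP11 : ∀ q : ℕ, P q 1 1 = if q = m then 1 else 0)
    (hPii : ∀ q i : ℕ, 2 ≤ i → P q i i = if q = 0 then 1 else 0)
    (hPrec : ∀ q i t : ℕ, 1 ≤ i → i ≤ t →
      P q i (t + 1) = ∑ j ∈ Finset.Icc 0 (min m q),
        (m.choose j : ℝ) * (((q : ℝ) - (j : ℝ) + A) / ((m + A) * t)) ^ j *
          (1 - ((q : ℝ) - (j : ℝ) + A) / ((m + A) * t)) ^ (m - j) * P (q - j) i t)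
    (Pbar : ℕ → ℕ → ℝ)
    (hPbar : ∀ q t : ℕ, 2 ≤ t →
      Pbar q t = (1 / ((t : ℝ) - 1)) * ∑ i ∈ Finset.Icc 2 t, P q i t) :
    ∀ t : ℕ, 2 ≤ t →
      Pbar 0 (t + 1) =
        (((t : ℝ) - 1) / (t : ℝ)) * Pbar 0 t * (1 - A / ((m + A) * t)) ^ m + 1 / (t : ℝ) :=
  dms_reduced_recursion_deg_zero_general m A P hPii hPrec Pbar hPbar
end

section
/- For every t ≥ 3, the reduced degree distribution has the closed form P̄(0,t) = (1/(t-1)) · ∏_{i=2}^{t-1} (1 - A/((m+A)·i))^m · [1 + Σ_{l=2}^{t-1} ∏_{j=2}^{l} (1 - A/((m+A)·j))^{-m}]. -/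
open Finset

/-!
A vertex added at time `i ≥ 2` keeps degree `0` from time `s` to `s + 1` with probability
`c s ^ m`, where `c s = 1 - A / ((m + A) s)`, so `P(0,i,t) = ∏_{s=i}^{t-1} c s ^ m`.
Summing over `i` and factoring out the full product `∏_{s=2}^{t-1} c s ^ m` gives the closed form.
-/

theorem eq_prod_Ico_of_succ_eq_mul {M : Type*} [CommMonoid M] {f g : ℕ → M} {a : ℕ}
    (ha : f a = 1) (hf : ∀ t, a ≤ t → f (t + 1) = g t * f t) {t : ℕ} (ht : a ≤ t) :
    f t = ∏ s ∈ Ico a t, g s := by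
  induction t, ht using Nat.le_induction with
  | base => simp [ha]
  | succ t ht ih => rw [hf t ht, ih, prod_Ico_succ_top ht, mul_comm]

theorem sum_Icc_prod_Ico_eq {K : Type*} [Field K] {g : ℕ → K} {a t : ℕ} (hat : a ≤ t)
    (hg : ∀ s ∈ Ico a t, g s ≠ 0) :
    ∑ i ∈ Icc a t, ∏ s ∈ Ico i t, g s =
      (∏ s ∈ Ico a t, g s) * (1 + ∑ l ∈ Ico a t, (∏ s ∈ Icc a l, g s)⁻¹) := by
  have hfactor : ∀ i ∈ Icc a t,
      ∏ s ∈ Ico i t, g s = (∏ s ∈ Ico a t, g s) * (∏ s ∈ Ico a i, g s)⁻¹ := by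
    intro i hi
    obtain ⟨hai, hit⟩ := mem_Icc.1 hi
    have hne : ∏ s ∈ Ico a i, g s ≠ 0 :=
      prod_ne_zero_iff.2 fun s hs => hg s (Ico_subset_Ico_right hit hs)
    rw [← prod_Ico_consecutive g hai hit, mul_comm (∏ s ∈ Ico a i, g s),
      mul_inv_cancel_right₀ hne]
  rw [sum_congr rfl hfactor, ← mul_sum, ← add_sum_Ioc_eq_sum_Icc hat, Ico_self, prod_empty,
    inv_one, ← Ico_add_one_add_one_eq_Ioc, ← sum_Ico_add']
  simp only [Ico_add_one_right_eq_Icc]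

theorem one_sub_div_mul_pos {m : ℕ} {A : ℝ} (hA : 0 < A) {s : ℕ} (hs : 2 ≤ s) :
    0 < 1 - A / ((m + A) * s) := by
  have hs' : (2 : ℝ) ≤ s := by exact_mod_cast hs
  rw [sub_pos, div_lt_one (by positivity)]
  nlinarith [m.cast_nonneg (α := ℝ)]

theorem dms_reduced_closed_form_deg_zero_general
    (m : ℕ) (A : ℝ) (hA : 0 < A)
    (P : ℕ → ℕ → ℕ → ℝ)
    (hPii : ∀ q i : ℕ, 2 ≤ i → P q i i = if q = 0 then 1 else 0)
    (hPrec : ∀ q i t : ℕ, 1 ≤ i → i ≤ t →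
      P q i (t + 1) = ∑ j ∈ Finset.Icc 0 (min m q),
        (m.choose j : ℝ) * (((q : ℝ) - (j : ℝ) + A) / ((m + A) * t)) ^ j *
          (1 - ((q : ℝ) - (j : ℝ) + A) / ((m + A) * t)) ^ (m - j) * P (q - j) i t)
    (Pbar : ℕ → ℕ → ℝ)
    (hPbar : ∀ q t : ℕ, 2 ≤ t →
      Pbar q t = (1 / ((t : ℝ) - 1)) * ∑ i ∈ Finset.Icc 2 t, P q i t) :
    ∀ t : ℕ, 3 ≤ t →
      Pbar 0 t =
        (1 / ((t : ℝ) - 1)) *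
          (∏ i ∈ Finset.Icc 2 (t - 1), (1 - A / ((m + A) * (i : ℝ))) ^ m) *
          (1 + ∑ l ∈ Finset.Icc 2 (t - 1),
            ∏ j ∈ Finset.Icc 2 l, (1 - A / ((m + A) * (j : ℝ))) ^ (-(m : ℤ))) := by
  intro t ht
  have hstep : ∀ i, 2 ≤ i → ∀ s, i ≤ s →
      P 0 i (s + 1) = (1 - A / ((m + A) * s)) ^ m * P 0 i s := by
    intro i hi s hs
    simp [hPrec 0 i s (by omega) hs]
  have hP0 : ∀ i ∈ Icc 2 t, P 0 i t = ∏ s ∈ Ico i t, (1 - A / ((m + A) * s)) ^ m := by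
    intro i hi
    obtain ⟨hi, hit⟩ := mem_Icc.1 hi
    exact eq_prod_Ico_of_succ_eq_mul (by simp [hPii 0 i hi]) (hstep i hi) hit
  have hne : ∀ s ∈ Ico 2 t, (1 - A / ((m + A) * s)) ^ m ≠ 0 :=
    fun s hs => pow_ne_zero _ (one_sub_div_mul_pos hA (mem_Ico.1 hs).1).ne'
  obtain ⟨n, rfl⟩ : ∃ n, t = n + 1 := ⟨t - 1, by omega⟩
  rw [hPbar 0 _ (by omega), sum_congr rfl hP0, sum_Icc_prod_Ico_eq (by omega) hne,
    Nat.add_sub_cancel, Ico_add_one_right_eq_Icc]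
  simp only [zpow_neg, zpow_natCast, prod_inv_distrib]
  ring

/-- closed form for the reduced degree distribution at degree 0. -/
theorem dms_reduced_closed_form_deg_zero
    (m : ℕ) (hm : 1 ≤ m) (A : ℝ) (hA : 0 < A)
    (P : ℕ → ℕ → ℕ → ℝ)
    (hP11 : ∀ q : ℕ, P q 1 1 = if q = m then 1 else 0)
    (hPii : ∀ q i : ℕ, 2 ≤ i → P q i i = if q = 0 then 1 else 0)
    (hPrec : ∀ q i t : ℕ, 1 ≤ i → i ≤ t →
      P q i (t + 1) = ∑ j ∈ Finset.Icc 0 (min m q),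
        (m.choose j : ℝ) * (((q : ℝ) - (j : ℝ) + A) / ((m + A) * t)) ^ j *
          (1 - ((q : ℝ) - (j : ℝ) + A) / ((m + A) * t)) ^ (m - j) * P (q - j) i t)
    (Pbar : ℕ → ℕ → ℝ)
    (hPbar : ∀ q t : ℕ, 2 ≤ t →
      Pbar q t = (1 / ((t : ℝ) - 1)) * ∑ i ∈ Finset.Icc 2 t, P q i t) :
    ∀ t : ℕ, 3 ≤ t →
      Pbar 0 t =
        (1 / ((t : ℝ) - 1)) *
          (∏ i ∈ Finset.Icc 2 (t - 1), (1 - A / ((m + A) * (i : ℝ))) ^ m) *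
          (1 + ∑ l ∈ Finset.Icc 2 (t - 1),
            ∏ j ∈ Finset.Icc 2 l, (1 - A / ((m + A) * (j : ℝ))) ^ (-(m : ℤ))) :=
  dms_reduced_closed_form_deg_zero_general m A hA P hPii hPrec Pbar hPbar
end

section
/- With x_n = 1 + Σ_{l=2}^{n-1} ∏_{j=2}^{l} (1 - A/((m+A)·j))^{-m} and y_n = (n-1) · ∏_{i=2}^{n-1} (1 - A/((m+A)·i))^{-m}, the ratio of successive differences converges: (x_{n+1} - x_n)/(y_{n+1} - y_n) → (m+A)/(m+A+mA) as n → ∞. -/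
/-!
With `c = A / (m + A)` and `W k = ∏_{j=2}^{k} (1 - c/j)^{-m}`, the differences are
`x (n+1) - x n = W n` and `y (n+1) - y n = n W n - (n-1) W (n-1) = W n (n - (n-1) (1 - c/n)^m)`,
so the ratio is `1 / (n - (n-1) (1 - c/n)^m)`. The denominator is the difference quotient of
`u ↦ (u - 1) (1 - c u)^m` at `0` with step `1/n`, hence tends to its derivative `1 + m c`, and
`1 / (1 + m c) = (m + A) / (m + A + m A)`.
-/

open Finset Filter Topology

noncomputable def weightProd (c : ℝ) (m k : ℕ) : ℝ :=
  ∏ j ∈ Icc 2 k, (1 - c / j) ^ (-(m : ℤ))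

section weightProd

variable {c : ℝ} {m : ℕ}

lemma weightProd_ne_zero (hc : ∀ j : ℕ, 2 ≤ j → 1 - c / j ≠ 0) (k : ℕ) :
    weightProd c m k ≠ 0 :=
  prod_ne_zero_iff.mpr fun j hj => zpow_ne_zero _ (hc j (mem_Icc.mp hj).1)

lemma weightProd_mul_pow {n : ℕ} (hn : 2 ≤ n) (h : 1 - c / n ≠ 0) :
    weightProd c m n * (1 - c / n) ^ m = weightProd c m (n - 1) := by
  obtain ⟨k, rfl⟩ : ∃ k, n = k + 1 := ⟨n - 1, by omega⟩
  rw [weightProd, prod_Icc_succ_top hn, zpow_neg, zpow_natCast, mul_assoc,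
    inv_mul_cancel₀ (pow_ne_zero m h), mul_one, Nat.add_sub_cancel, weightProd]

end weightProd

lemma sub_eq_of_eq_one_add_sum_Icc {x f : ℕ → ℝ}
    (hx : ∀ n : ℕ, 2 ≤ n → x n = 1 + ∑ l ∈ Icc 2 (n - 1), f l) {n : ℕ} (hn : 2 ≤ n) :
    x (n + 1) - x n = f n := by
  obtain ⟨k, rfl⟩ : ∃ k, n = k + 1 := ⟨n - 1, by omega⟩
  rw [hx _ (by omega), hx _ hn, Nat.add_sub_cancel, Nat.add_sub_cancel,
    sum_Icc_succ_top hn]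
  ring

lemma tendsto_sub_pred_mul_one_sub_div_pow (c : ℝ) (m : ℕ) :
    Tendsto (fun n : ℕ => (n : ℝ) - (n - 1) * (1 - c / n) ^ m) atTop (𝓝 (1 + m * c)) := by
  have hderiv : HasDerivAt (fun u : ℝ => (u - 1) * (1 - c * u) ^ m) (1 + m * c) 0 := by
    have hlin : HasDerivAt (fun u : ℝ => u - 1) 1 0 := (hasDerivAt_id 0).sub_const 1
    have hpow : HasDerivAt (fun u : ℝ => (1 - c * u) ^ m) (-(m * c)) 0 := by
      simpa using (((hasDerivAt_id (0 : ℝ)).const_mul c).const_sub 1).fun_pow m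
    exact (hlin.fun_mul hpow).congr_deriv (by simp)
  have hslope := hderiv.tendsto_slope_zero_right.comp
    (tendsto_inv_atTop_nhdsGT_zero.comp tendsto_natCast_atTop_atTop)
  refine hslope.congr' ?_
  filter_upwards [eventually_ge_atTop 1] with n hn
  simp only [Function.comp_apply, inv_inv, zero_add, smul_eq_mul, mul_zero, sub_zero,
    one_pow, ← div_eq_mul_inv]
  field_simp
  ring

lemma difference_ratio_eq_one_div {c : ℝ} {m : ℕ} (hc : ∀ j : ℕ, 2 ≤ j → 1 - c / j ≠ 0)
    {x y : ℕ → ℝ}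
    (hx : ∀ n : ℕ, 2 ≤ n → x n = 1 + ∑ l ∈ Icc 2 (n - 1), weightProd c m l)
    (hy : ∀ n : ℕ, 2 ≤ n → y n = ((n : ℝ) - 1) * weightProd c m (n - 1))
    {n : ℕ} (hn : 2 ≤ n) :
    (x (n + 1) - x n) / (y (n + 1) - y n) = 1 / ((n : ℝ) - (n - 1) * (1 - c / n) ^ m) := by
  have hy_sub : y (n + 1) - y n = weightProd c m n * ((n : ℝ) - (n - 1) * (1 - c / n) ^ m) := by
    rw [hy _ (by omega), hy _ hn, Nat.add_sub_cancel, ← weightProd_mul_pow hn (hc n hn)]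
    push_cast
    ring
  rw [sub_eq_of_eq_one_add_sum_Icc hx hn, hy_sub,
    div_mul_cancel_left₀ (weightProd_ne_zero hc n), one_div]

theorem dms_aux_difference_ratio_limit_general
    (m : ℕ) (A : ℝ) (hA : 0 < A)
    (x y : ℕ → ℝ)
    (hx : ∀ n : ℕ, 2 ≤ n →
      x n = 1 + ∑ l ∈ Finset.Icc 2 (n - 1),
        ∏ j ∈ Finset.Icc 2 l, (1 - A / ((m + A) * (j : ℝ))) ^ (-(m : ℤ)))
    (hy : ∀ n : ℕ, 2 ≤ n →
      y n = ((n : ℝ) - 1) *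
        ∏ i ∈ Finset.Icc 2 (n - 1), (1 - A / ((m + A) * (i : ℝ))) ^ (-(m : ℤ))) :
    Filter.Tendsto (fun n : ℕ => (x (n + 1) - x n) / (y (n + 1) - y n))
      Filter.atTop (nhds (((m : ℝ) + A) / ((m : ℝ) + A + (m : ℝ) * A))) := by
  have hmA : (0 : ℝ) < m + A := by positivity
  set c := A / ((m : ℝ) + A)
  have hc : ∀ j : ℕ, 2 ≤ j → 1 - c / j ≠ 0 := by
    intro j hj
    have hc1 : c ≤ 1 := (div_le_one hmA).mpr (by linarith [m.cast_nonneg (α := ℝ)])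
    have hj : (2 : ℝ) ≤ j := by exact_mod_cast hj
    rw [sub_ne_zero, ne_comm]
    exact ((div_lt_one (by positivity)).mpr (by linarith)).ne
  simp only [← div_div] at hx hy
  have hlimit : 1 / (1 + m * c) = ((m : ℝ) + A) / (m + A + m * A) := by
    simp only [c]
    field_simp
  rw [← hlimit]
  refine Tendsto.congr' ?_ (tendsto_const_nhds.div (tendsto_sub_pred_mul_one_sub_div_pow c m)
    (by positivity))
  filter_upwards [eventually_ge_atTop 2] with n hn
  exact (difference_ratio_eq_one_div hc hx hy hn).symm

/-- the ratio of successive differences of the auxiliary sequences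
`x` and `y` converges to `(m+A)/(m+A+mA)`. -/
theorem dms_aux_difference_ratio_limit
    (m : ℕ) (hm : 1 ≤ m) (A : ℝ) (hA : 0 < A)
    (x y : ℕ → ℝ)
    (hx : ∀ n : ℕ, 2 ≤ n →
      x n = 1 + ∑ l ∈ Finset.Icc 2 (n - 1),
        ∏ j ∈ Finset.Icc 2 l, (1 - A / ((m + A) * (j : ℝ))) ^ (-(m : ℤ)))
    (hy : ∀ n : ℕ, 2 ≤ n →
      y n = ((n : ℝ) - 1) *
        ∏ i ∈ Finset.Icc 2 (n - 1), (1 - A / ((m + A) * (i : ℝ))) ^ (-(m : ℤ))) :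
    Filter.Tendsto (fun n : ℕ => (x (n + 1) - x n) / (y (n + 1) - y n))
      Filter.atTop (nhds (((m : ℝ) + A) / ((m : ℝ) + A + (m : ℝ) * A))) :=
  dms_aux_difference_ratio_limit_general m A hA x y hx hy
end

section
/- The limit lim_{t→∞} P̄(0,t) exists and equals (m+A)/(m+A+mA). -/
open Finset Filter Topology

/-!
Only the column `q = 0` matters. With `c = A/(m+A)`, a vertex of degree `0` keeps degree `0`
during step `t` with probability `(1 - c/t)^m`, and vertex `t+1` is born with degree `0`, so
`S t = ∑_{i=2}^t P(0,i,t)` satisfies `S (t+1) = 1 + (1 - c/t)^m S t`. For `L = 1/(1 + m c)` the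
error `E t = S t - L t` obeys `|E (t+1)| ≤ (1 - c/t) |E t| + L (m c)^2 / t` by Bernoulli's
inequality, hence stays bounded, and `S t / (t - 1) → L = (m+A)/(m+A+mA)`.
-/

lemma one_sub_pow_le (m : ℕ) {x : ℝ} (hx0 : 0 ≤ x) (hx1 : x ≤ 1) :
    (1 - x) ^ m ≤ 1 - m * x + (m * x) ^ 2 := by
  induction m with
  | zero => simp
  | succ n ih =>
    calc (1 - x) ^ (n + 1) = (1 - x) * (1 - x) ^ n := by ring
      _ ≤ (1 - x) * (1 - n * x + (n * x) ^ 2) := by gcongr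
      _ ≤ 1 - (n + 1 : ℕ) * x + ((n + 1 : ℕ) * x) ^ 2 := by
        push_cast
        nlinarith [mul_nonneg hx0 (sq_nonneg ((n : ℝ) * x))]

lemma abs_mul_one_sub_one_sub_div_pow_sub_le (m : ℕ) {c t : ℝ} (hc : 0 ≤ c) (ht : 0 < t)
    (hct : c ≤ t) : |t * (1 - (1 - c / t) ^ m) - m * c| ≤ (m * c) ^ 2 / t := by
  have hx0 : 0 ≤ c / t := div_nonneg hc ht.le
  have hx1 : c / t ≤ 1 := (div_le_one ht).2 hct
  have hlow : 1 - m * (c / t) ≤ (1 - c / t) ^ m := by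
    simpa [sub_eq_add_neg] using one_add_mul_le_pow (a := -(c / t)) (by linarith) m
  have hupp := one_sub_pow_le m hx0 hx1
  have hscale : t * ((1 - c / t) ^ m - (1 - m * (c / t))) = m * c - t * (1 - (1 - c / t) ^ m) := by
    field_simp; ring
  have hsq : t * (m * (c / t)) ^ 2 = (m * c) ^ 2 / t := by field_simp
  rw [abs_sub_comm, ← hscale, ← hsq, abs_mul, abs_of_pos ht]
  gcongr
  rw [abs_le]
  constructor <;> nlinarith [sq_nonneg ((m : ℝ) * (c / t))]

lemma abs_sub_mul_le_of_rec {S a : ℕ → ℝ} {L b δ K : ℝ} {t₀ : ℕ} (hL0 : 0 ≤ L)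
    (hL : L * (1 + b) = 1) (hδ : 0 < δ)
    (hrec : ∀ t ≥ t₀, S (t + 1) = 1 + a t * S t)
    (ha0 : ∀ t ≥ t₀, 0 ≤ a t) (ha : ∀ t ≥ t₀, a t ≤ 1 - δ / t)
    (hb : ∀ t ≥ t₀, |t * (1 - a t) - b| ≤ K / t) :
    ∀ t ≥ t₀, |S t - L * t| ≤ max |S t₀ - L * t₀| (L * K / δ) := by
  set M := max |S t₀ - L * t₀| (L * K / δ)
  have hKM : L * K ≤ δ * M := by
    rw [mul_comm δ, ← div_le_iff₀ hδ]; exact le_max_right _ _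
  intro t ht
  induction t, ht using Nat.le_induction with
  | base => exact le_max_left _ _
  | succ t ht ih =>
    have herr : S (t + 1) - L * ↑(t + 1) = a t * (S t - L * t) - L * (t * (1 - a t) - b) := by
      rw [hrec t ht]; push_cast; linear_combination -hL
    calc |S (t + 1) - L * ↑(t + 1)|
        ≤ a t * |S t - L * t| + L * |t * (1 - a t) - b| := by
          rw [herr]
          refine (abs_sub _ _).trans_eq ?_
          rw [abs_mul, abs_mul, abs_of_nonneg (ha0 t ht), abs_of_nonneg hL0]
      _ ≤ (1 - δ / t) * M + L * (K / t) := by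
          gcongr
          · linarith [ha0 t ht, ha t ht]
          · exact ha t ht
          · exact hb t ht
      _ = M - (δ * M - L * K) / t := by ring
      _ ≤ M := by
          have : 0 ≤ (δ * M - L * K) / t := div_nonneg (by linarith) (Nat.cast_nonneg t)
          linarith

lemma tendsto_div_sub_one_of_abs_sub_mul_le {S : ℕ → ℝ} {L M : ℝ}
    (h : ∀ᶠ t in atTop, |S t - L * t| ≤ M) :
    Tendsto (fun t : ℕ => S t / ((t : ℝ) - 1)) atTop (𝓝 L) := by
  have hden : Tendsto (fun t : ℕ => (t : ℝ) - 1) atTop atTop :=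
    tendsto_atTop_add_const_right _ _ tendsto_natCast_atTop_atTop
  have hsmall : Tendsto (fun t : ℕ => (S t - L * t + L) / ((t : ℝ) - 1)) atTop (𝓝 0) := by
    refine squeeze_zero_norm' ?_ ((tendsto_const_nhds (x := M + |L|)).div_atTop hden)
    filter_upwards [h, eventually_gt_atTop 1] with t hSt ht
    have ht1 : (0 : ℝ) < t - 1 := by
      have : (1 : ℝ) < t := by exact_mod_cast ht
      linarith
    rw [norm_div, Real.norm_eq_abs, Real.norm_eq_abs, abs_of_pos ht1]
    gcongr
    exact (abs_add_le _ _).trans (by linarith)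
  rw [← add_zero L]
  refine (hsmall.const_add L).congr' ?_
  filter_upwards [eventually_gt_atTop 1] with t ht
  have ht1 : (t : ℝ) - 1 ≠ 0 := by
    have : (1 : ℝ) < t := by exact_mod_cast ht
    linarith
  field_simp
  ring

lemma exists_abs_sub_inv_one_add_mul_le {S : ℕ → ℝ} {m t₀ : ℕ} {c : ℝ} (hm : m ≠ 0)
    (hc0 : 0 < c) (hc1 : c ≤ 1) (ht₀ : 1 ≤ t₀)
    (hrec : ∀ t ≥ t₀, S (t + 1) = 1 + (1 - c / t) ^ m * S t) :
    ∃ M, ∀ t ≥ t₀, |S t - (1 + m * c)⁻¹ * t| ≤ M := by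
  have hct : ∀ t : ℕ, t ≥ t₀ → 0 < (t : ℝ) ∧ c ≤ t := fun t ht => by
    have : (1 : ℝ) ≤ t := by exact_mod_cast ht₀.trans ht
    constructor <;> linarith
  have hx : ∀ t : ℕ, t ≥ t₀ → 0 ≤ 1 - c / t ∧ 1 - c / t ≤ 1 := fun t ht =>
    ⟨sub_nonneg.2 ((div_le_one (hct t ht).1).2 (hct t ht).2),
      sub_le_self _ (div_nonneg hc0.le (hct t ht).1.le)⟩
  exact ⟨_, abs_sub_mul_le_of_rec (K := (m * c) ^ 2) (by positivity)
    (inv_mul_cancel₀ (by positivity)) hc0 hrec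
    (fun t ht => pow_nonneg (hx t ht).1 m)
    (fun t ht => pow_le_of_le_one (hx t ht).1 (hx t ht).2 hm)
    (fun t ht => abs_mul_one_sub_one_sub_div_pow_sub_le m hc0.le (hct t ht).1 (hct t ht).2)⟩

theorem dms_reduced_limit_deg_zero_general
    (m : ℕ) (hm : 1 ≤ m) (A : ℝ) (hA : 0 < A)
    (P : ℕ → ℕ → ℕ → ℝ)
    (hPii : ∀ q i : ℕ, 2 ≤ i → P q i i = if q = 0 then 1 else 0)
    (hPrec : ∀ q i t : ℕ, 1 ≤ i → i ≤ t →
      P q i (t + 1) = ∑ j ∈ Finset.Icc 0 (min m q),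
        (m.choose j : ℝ) * (((q : ℝ) - (j : ℝ) + A) / ((m + A) * t)) ^ j *
          (1 - ((q : ℝ) - (j : ℝ) + A) / ((m + A) * t)) ^ (m - j) * P (q - j) i t)
    (Pbar : ℕ → ℕ → ℝ)
    (hPbar : ∀ q t : ℕ, 2 ≤ t →
      Pbar q t = (1 / ((t : ℝ) - 1)) * ∑ i ∈ Finset.Icc 2 t, P q i t) :
    Filter.Tendsto (fun t : ℕ => Pbar 0 t) Filter.atTop
      (nhds (((m : ℝ) + A) / ((m : ℝ) + A + (m : ℝ) * A))) := by
  set c : ℝ := A / (m + A)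
  have hmA : (0 : ℝ) < m + A := by positivity
  have hstep : ∀ i t, 2 ≤ i → i ≤ t → P 0 i (t + 1) = (1 - c / t) ^ m * P 0 i t := by
    intro i t hi hit
    rw [hPrec 0 i t (by omega) hit]
    simp [c, div_div]
  have hrec : ∀ t ≥ 2, ∑ i ∈ Icc 2 (t + 1), P 0 i (t + 1)
      = 1 + (1 - c / t) ^ m * ∑ i ∈ Icc 2 t, P 0 i t := by
    intro t ht
    rw [sum_Icc_succ_top (by omega), hPii 0 (t + 1) (by omega), if_pos rfl, mul_sum,
      sum_congr rfl fun i hi => hstep i t (mem_Icc.1 hi).1 (mem_Icc.1 hi).2, add_comm]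
  obtain ⟨M, hM⟩ := exists_abs_sub_inv_one_add_mul_le (S := fun t => ∑ i ∈ Icc 2 t, P 0 i t)
    (by omega) (div_pos hA hmA) (div_le_one_of_le₀ (by linarith) hmA.le) one_le_two hrec
  have hL : (1 + m * c)⁻¹ = (m + A) / (m + A + m * A) := by
    simp only [c]; field_simp
  rw [← hL]
  refine (tendsto_div_sub_one_of_abs_sub_mul_le (eventually_atTop.2 ⟨2, hM⟩)).congr' ?_
  filter_upwards [eventually_ge_atTop 2] with t ht
  rw [hPbar 0 t ht, one_div, inv_mul_eq_div]

/-- the reduced degree distribution at degree 0 converges to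
`(m+A)/(m+A+mA)`. -/
theorem dms_reduced_limit_deg_zero
    (m : ℕ) (hm : 1 ≤ m) (A : ℝ) (hA : 0 < A)
    (P : ℕ → ℕ → ℕ → ℝ)
    (hP11 : ∀ q : ℕ, P q 1 1 = if q = m then 1 else 0)
    (hPii : ∀ q i : ℕ, 2 ≤ i → P q i i = if q = 0 then 1 else 0)
    (hPrec : ∀ q i t : ℕ, 1 ≤ i → i ≤ t →
      P q i (t + 1) = ∑ j ∈ Finset.Icc 0 (min m q),
        (m.choose j : ℝ) * (((q : ℝ) - (j : ℝ) + A) / ((m + A) * t)) ^ j *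
          (1 - ((q : ℝ) - (j : ℝ) + A) / ((m + A) * t)) ^ (m - j) * P (q - j) i t)
    (Pbar : ℕ → ℕ → ℝ)
    (hPbar : ∀ q t : ℕ, 2 ≤ t →
      Pbar q t = (1 / ((t : ℝ) - 1)) * ∑ i ∈ Finset.Icc 2 t, P q i t) :
    Filter.Tendsto (fun t : ℕ => Pbar 0 t) Filter.atTop
      (nhds (((m : ℝ) + A) / ((m : ℝ) + A + (m : ℝ) * A))) :=
  dms_reduced_limit_deg_zero_general m hm A hA P hPii hPrec Pbar hPbar
end

section
/- The limit lim_{t→∞} P(0,t) exists and equals (m+A)/(m+A+mA), where P(0,t) is the full network degree distribution at degree 0. -/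
/-!
A node of degree 0 keeps degree 0 through step `t` with probability `(1 - a / t) ^ m`, where
`a = A / (m + A)`, and each step adds one node of degree 0. So the expected number `S t` of
degree-0 nodes satisfies `S (t + 1) = 1 + (1 - a / t) ^ m * S t`, with
`t * (1 - (1 - a / t) ^ m) → m * a`. Writing `S t = L * t + u t` with `L = (1 + m * a)⁻¹`
gives `|u (t + 1)| ≤ |u t| + o(1)`, so `u t = o(t)` by Cesàro and `S t / t → L`.
-/

open Finset Filter Topology

theorem tendsto_natCast_mul_one_sub_one_sub_div_pow (m : ℕ) (a : ℝ) :
    Tendsto (fun t : ℕ => t * (1 - (1 - a / t) ^ m)) atTop (𝓝 (m * a)) := by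
  rcases eq_or_ne a 0 with rfl | ha
  · simp
  have hslope := (hasDerivAt_pow m (1 : ℝ)).tendsto_slope_zero
  have hstep : Tendsto (fun t : ℕ => -a / t) atTop (𝓝[≠] 0) :=
    tendsto_nhdsWithin_iff.2 ⟨tendsto_const_div_atTop_nhds_zero_nat (-a),
      eventually_ge_atTop 1 |>.mono fun t ht => by simp [ha]; omega⟩
  have hlim := (hslope.comp hstep).const_mul a
  simp only [one_pow, mul_one] at hlim
  rw [mul_comm]
  refine hlim.congr' ?_
  filter_upwards [eventually_ge_atTop 1] with t ht
  have : (t : ℝ) ≠ 0 := by positivity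
  simp only [Function.comp_apply, smul_eq_mul]
  field_simp
  ring

theorem tendsto_div_natCast_zero_of_abs_succ_le {u e : ℕ → ℝ} (he : Tendsto e atTop (𝓝 0))
    (hu : ∀ᶠ t in atTop, |u (t + 1)| ≤ |u t| + |e t|) :
    Tendsto (fun t : ℕ => u t / t) atTop (𝓝 0) := by
  obtain ⟨N, hN⟩ := eventually_atTop.1 hu
  have hbound : ∀ t ≥ N, |u t| ≤ |u N| + ∑ k ∈ range t, |e k| := by
    intro t ht
    induction t, ht using Nat.le_induction with
    | base => simpa using sum_nonneg fun k _ => abs_nonneg (e k)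
    | succ t ht ih =>
      rw [sum_range_succ]
      linarith [hN t ht]
  have hmajor :
      Tendsto (fun t : ℕ => |u N| / t + (t⁻¹ : ℝ) * ∑ k ∈ range t, |e k|) atTop (𝓝 0) := by
    simpa using (tendsto_const_div_atTop_nhds_zero_nat |u N|).add he.abs.cesaro
  refine squeeze_zero_norm' ?_ hmajor
  filter_upwards [eventually_ge_atTop N] with t ht
  rw [Real.norm_eq_abs, abs_div, Nat.abs_cast, div_eq_inv_mul, div_eq_inv_mul, ← mul_add]
  exact mul_le_mul_of_nonneg_left (hbound t ht) (by positivity)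

theorem tendsto_div_natCast_of_succ_eq_one_add_mul {S r : ℕ → ℝ} {c : ℝ}
    (hr : ∀ᶠ t in atTop, |r t| ≤ 1)
    (hrc : Tendsto (fun t : ℕ => t * (1 - r t)) atTop (𝓝 c))
    (hS : ∀ᶠ t in atTop, S (t + 1) = 1 + r t * S t) :
    Tendsto (fun t : ℕ => S t / t) atTop (𝓝 (1 + c)⁻¹) := by
  have hc : 0 ≤ c := ge_of_tendsto hrc <| by
    filter_upwards [hr] with t ht
    exact mul_nonneg t.cast_nonneg (sub_nonneg.2 (le_of_abs_le ht))
  set L := (1 + c)⁻¹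
  have hL : L * (1 + c) = 1 := inv_mul_cancel₀ (by positivity)
  set e : ℕ → ℝ := fun t => 1 - L - L * (t * (1 - r t))
  have he : Tendsto e atTop (𝓝 0) := by
    have := (hrc.const_mul L).const_sub (1 - L)
    rwa [show 1 - L - L * c = 0 by linear_combination -hL] at this
  have hu : ∀ᶠ t in atTop, |S (t + 1) - L * ↑(t + 1)| ≤ |S t - L * t| + |e t| := by
    filter_upwards [hr, hS] with t hrt hSt
    have hdecomp : S (t + 1) - L * ↑(t + 1) = r t * (S t - L * t) + e t := by
      simp only [hSt, e]; push_cast; ring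
    calc |S (t + 1) - L * ↑(t + 1)| ≤ |r t| * |S t - L * t| + |e t| := by
          rw [hdecomp, ← abs_mul]; exact abs_add_le _ _
      _ ≤ |S t - L * t| + |e t| := by gcongr; exact mul_le_of_le_one_left (abs_nonneg _) hrt
  have hlim :=
    (tendsto_div_natCast_zero_of_abs_succ_le (u := fun t => S t - L * t) he hu).add_const L
  rw [zero_add] at hlim
  refine hlim.congr' ?_
  filter_upwards [eventually_ge_atTop 1] with t ht
  have : (t : ℝ) ≠ 0 := by positivity
  field_simp
  ring

theorem abs_one_sub_div_pow_le_one {a t : ℝ} (ha : 0 ≤ a) (hat : a ≤ t) (m : ℕ) :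
    |(1 - a / t) ^ m| ≤ 1 := by
  have h₀ : 0 ≤ a / t := div_nonneg ha (ha.trans hat)
  have h₁ : a / t ≤ 1 := div_le_one_of_le₀ hat (ha.trans hat)
  rw [abs_pow]
  exact pow_le_one₀ (abs_nonneg _) (abs_le.2 ⟨by linarith, by linarith⟩)

theorem sum_Icc_succ_eq_one_add_mul {x : ℕ → ℕ → ℝ} {r : ℝ} {t : ℕ}
    (hnew : x (t + 1) (t + 1) = 1) (hold : ∀ i ∈ Icc 1 t, x i (t + 1) = r * x i t) :
    ∑ i ∈ Icc 1 (t + 1), x i (t + 1) = 1 + r * ∑ i ∈ Icc 1 t, x i t := by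
  rw [sum_Icc_succ_top (by omega), hnew, mul_sum, add_comm, sum_congr rfl hold]

theorem dms_network_limit_deg_zero_general
    (m : ℕ) (A : ℝ) (hA : 0 < A)
    (P : ℕ → ℕ → ℕ → ℝ)
    (hPii : ∀ q i : ℕ, 2 ≤ i → P q i i = if q = 0 then 1 else 0)
    (hPrec : ∀ q i t : ℕ, 1 ≤ i → i ≤ t →
      P q i (t + 1) = ∑ j ∈ Finset.Icc 0 (min m q),
        (m.choose j : ℝ) * (((q : ℝ) - (j : ℝ) + A) / ((m + A) * t)) ^ j *
          (1 - ((q : ℝ) - (j : ℝ) + A) / ((m + A) * t)) ^ (m - j) * P (q - j) i t)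
    (Pnet : ℕ → ℕ → ℝ)
    (hPnet : ∀ q t : ℕ, 1 ≤ t →
      Pnet q t = (1 / (t : ℝ)) * ∑ i ∈ Finset.Icc 1 t, P q i t) :
    Filter.Tendsto (fun t : ℕ => Pnet 0 t) Filter.atTop
      (nhds (((m : ℝ) + A) / ((m : ℝ) + A + (m : ℝ) * A))) := by
  set a := A / (m + A)
  have ha : 0 ≤ a := by positivity
  have hS : ∀ t ≥ 1, ∑ i ∈ Icc 1 (t + 1), P 0 i (t + 1) =
      1 + (1 - a / t) ^ m * ∑ i ∈ Icc 1 t, P 0 i t := by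
    refine fun t ht => sum_Icc_succ_eq_one_add_mul (by simp [hPii 0 (t + 1) (by omega)]) ?_
    intro i hi
    simp [hPrec 0 i t (mem_Icc.1 hi).1 (mem_Icc.1 hi).2, a, div_div]
  have hr : ∀ᶠ t : ℕ in atTop, |(1 - a / t) ^ m| ≤ 1 := by
    filter_upwards [eventually_ge_atTop ⌈a⌉₊] with t ht
    exact abs_one_sub_div_pow_le_one ha (Nat.ceil_le.1 ht) m
  have hlim :=
    tendsto_div_natCast_of_succ_eq_one_add_mul (S := fun t => ∑ i ∈ Icc 1 t, P 0 i t) hr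
      (tendsto_natCast_mul_one_sub_one_sub_div_pow m a) (eventually_atTop.2 ⟨1, hS⟩)
  have hL : (1 + m * a)⁻¹ = ((m : ℝ) + A) / (m + A + m * A) := by
    have : (m : ℝ) + A ≠ 0 := by positivity
    simp only [a]
    field_simp
  rw [← hL]
  refine hlim.congr' ?_
  filter_upwards [eventually_ge_atTop 1] with t ht
  rw [hPnet 0 t ht]
  ring

/-- the network degree distribution at degree 0 converges to
`(m+A)/(m+A+mA)`. -/
theorem dms_network_limit_deg_zero
    (m : ℕ) (hm : 1 ≤ m) (A : ℝ) (hA : 0 < A)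
    (P : ℕ → ℕ → ℕ → ℝ)
    (hP11 : ∀ q : ℕ, P q 1 1 = if q = m then 1 else 0)
    (hPii : ∀ q i : ℕ, 2 ≤ i → P q i i = if q = 0 then 1 else 0)
    (hPrec : ∀ q i t : ℕ, 1 ≤ i → i ≤ t →
      P q i (t + 1) = ∑ j ∈ Finset.Icc 0 (min m q),
        (m.choose j : ℝ) * (((q : ℝ) - (j : ℝ) + A) / ((m + A) * t)) ^ j *
          (1 - ((q : ℝ) - (j : ℝ) + A) / ((m + A) * t)) ^ (m - j) * P (q - j) i t)
    (Pnet : ℕ → ℕ → ℝ)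
    (hPnet : ∀ q t : ℕ, 1 ≤ t →
      Pnet q t = (1 / (t : ℝ)) * ∑ i ∈ Finset.Icc 1 t, P q i t) :
    Filter.Tendsto (fun t : ℕ => Pnet 0 t) Filter.atTop
      (nhds (((m : ℝ) + A) / ((m : ℝ) + A + (m : ℝ) * A))) :=
  dms_network_limit_deg_zero_general m A hA P hPii hPrec Pnet hPnet
end

section
/- Fix q ≥ 1. If the limit lim_{t→∞} P(q-1,t) = P(q-1) exists, then the limit lim_{t→∞} P(q,t) also exists and equals (m(q+A-1)/(m(q+A+1)+A)) · P(q-1). -/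
/-!
Summing the one-step recursion over the nodes and expanding the binomial attachment
probabilities to first order in `1/t` gives, up to an `O(1/t)` error (each node's degree
distribution is a probability vector, so the second-order terms are uniformly small),
`(t+1) P(q,t+1) = (t - a) P(q,t) + b P(q-1,t)` with `a = m(q+A)/(m+A)` and
`b = m(q+A-1)/(m+A)`. For `a ≥ 0` such a recurrence forces `P(q,t) → b L / (1 + a)`: for
`t ≥ a` the weighted deviation `t |P(q,t) - b L / (1 + a)|` grows by at most a null sequence
per step, so the deviation is dominated by a Cesàro mean.
-/

open Finset Filter Topology

lemma one_sub_mul_le_one_sub_pow {x : ℝ} (hx : x ≤ 1) (k : ℕ) :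
    1 - k * x ≤ (1 - x) ^ k := by
  simpa [sub_eq_add_neg] using one_add_mul_le_pow (a := -x) (by linarith) k

lemma one_sub_pow_le_one_sub_mul_add {x : ℝ} (hx₀ : 0 ≤ x) (hx₁ : x ≤ 1) (k : ℕ) :
    (1 - x) ^ k ≤ 1 - k * x + k ^ 2 * x ^ 2 := by
  induction k with
  | zero => simp
  | succ k ih =>
    -- `(1 - x)^(k+1) - (1 - (k+1) x) = (1 - x) ((1 - x)^k - (1 - k x)) + k x²`
    rw [pow_succ, mul_comm]
    push_cast
    nlinarith [mul_le_mul_of_nonneg_left ih (by linarith : (0:ℝ) ≤ 1 - x),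
      mul_nonneg (mul_nonneg hx₀ hx₀) (Nat.cast_nonneg k : (0:ℝ) ≤ k),
      mul_nonneg (mul_nonneg (mul_nonneg hx₀ hx₀) hx₀) (sq_nonneg (k : ℝ))]

lemma abs_one_sub_pow_sub_le {x : ℝ} (hx₀ : 0 ≤ x) (hx₁ : x ≤ 1) (k : ℕ) :
    |(1 - x) ^ k - (1 - k * x)| ≤ k ^ 2 * x ^ 2 := by
  have := one_sub_mul_le_one_sub_pow hx₁ k
  rw [abs_of_nonneg (by linarith)]
  linarith [one_sub_pow_le_one_sub_mul_add hx₀ hx₁ k]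

lemma abs_mul_one_sub_pow_sub_le {x : ℝ} (hx₀ : 0 ≤ x) (hx₁ : x ≤ 1) (k : ℕ) :
    |k * x * (1 - x) ^ (k - 1) - k * x| ≤ k ^ 2 * x ^ 2 := by
  have hlow := one_sub_mul_le_one_sub_pow hx₁ (k - 1)
  have hup : (1 - x) ^ (k - 1) ≤ 1 := pow_le_one₀ (by linarith) (by linarith)
  have hk : ((k - 1 : ℕ) : ℝ) ≤ k := by exact_mod_cast Nat.sub_le k 1
  rw [← mul_sub_one, abs_mul, abs_of_nonneg (by positivity), abs_of_nonpos (by linarith), sq, sq]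
  have : 1 - (1 - x) ^ (k - 1) ≤ k * x := by nlinarith
  calc k * x * -((1 - x) ^ (k - 1) - 1) ≤ k * x * (k * x) := by gcongr; linarith
    _ = k * k * (x * x) := by ring

lemma tendsto_div_natCast_of_succ_le_add {v e : ℕ → ℝ} (hv : ∀ t, 0 ≤ v t)
    (he : Tendsto e atTop (𝓝 0)) (hle : ∀ᶠ t in atTop, v (t + 1) ≤ v t + e t) :
    Tendsto (fun t => v t / t) atTop (𝓝 0) := by
  obtain ⟨T, hT⟩ := eventually_atTop.1 hle
  have hbound : ∀ t ≥ T, v t ≤ v T + ∑ s ∈ range t, |e s| := by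
    intro t ht
    induction t, ht using Nat.le_induction with
    | base => linarith [sum_nonneg fun s (_ : s ∈ range T) => abs_nonneg (e s)]
    | succ t ht ih =>
      rw [sum_range_succ]
      linarith [hT t ht, le_abs_self (e t)]
  have hlim : Tendsto (fun t : ℕ => v T / t + (t⁻¹ : ℝ) * ∑ s ∈ range t, |e s|)
      atTop (𝓝 0) := by
    simpa using (tendsto_const_div_atTop_nhds_zero_nat (v T)).add he.abs.cesaro
  refine squeeze_zero' (Eventually.of_forall fun t => div_nonneg (hv t) t.cast_nonneg) ?_ hlim
  filter_upwards [eventually_ge_atTop T] with t ht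
  rw [div_eq_inv_mul, div_eq_inv_mul, ← mul_add]
  exact mul_le_mul_of_nonneg_left (hbound t ht) (by positivity)

lemma tendsto_zero_of_tendsto_succ_mul_sub {a : ℝ} (ha : 0 ≤ a) {z : ℕ → ℝ}
    (h : Tendsto (fun t : ℕ => (t + 1) * z (t + 1) - (t - a) * z t) atTop (𝓝 0)) :
    Tendsto z atTop (𝓝 0) := by
  have hv : Tendsto (fun t : ℕ => t * |z t| / t) atTop (𝓝 0) := by
    refine tendsto_div_natCast_of_succ_le_add (fun t => by positivity) (by simpa using h.abs) ?_
    filter_upwards [eventually_ge_atTop ⌈a⌉₊] with t ht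
    have hat : a ≤ t := Nat.ceil_le.1 ht
    calc ((t + 1 : ℕ) : ℝ) * |z (t + 1)|
        = |(t - a) * z t + ((t + 1) * z (t + 1) - (t - a) * z t)| := by
          rw [add_sub_cancel, abs_mul, abs_of_nonneg (by positivity : (0:ℝ) ≤ t + 1)]
          push_cast
          ring
      _ ≤ (t - a) * |z t| + |(t + 1) * z (t + 1) - (t - a) * z t| := by
          grw [abs_add_le, abs_mul, abs_of_nonneg (by linarith : (0:ℝ) ≤ t - a)]
      _ ≤ t * |z t| + |(t + 1) * z (t + 1) - (t - a) * z t| := by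
          gcongr; linarith
  refine squeeze_zero_norm' ?_ hv
  filter_upwards [eventually_ge_atTop 1] with t ht
  rw [Real.norm_eq_abs, mul_div_cancel_left₀ _ (by positivity)]

lemma tendsto_of_tendsto_succ_mul_sub {a c : ℝ} (ha : 0 ≤ a) {y : ℕ → ℝ}
    (h : Tendsto (fun t : ℕ => (t + 1) * y (t + 1) - (t - a) * y t) atTop (𝓝 c)) :
    Tendsto y atTop (𝓝 (c / (1 + a))) := by
  have hz := tendsto_zero_of_tendsto_succ_mul_sub ha (z := fun t => y t - c / (1 + a))
    (by
      convert h.sub_const c using 2 with t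
      · field_simp; ring
      · simp)
  simpa using hz.add_const (c / (1 + a))

/-- `P q i t` is the probability that node `i` has degree `q` at time `t`. -/
structure IsDMSDegreeProb (m : ℕ) (A : ℝ) (P : ℕ → ℕ → ℕ → ℝ) : Prop where
  first_node : ∀ q : ℕ, P q 1 1 = if q = m then 1 else 0
  new_node : ∀ q i : ℕ, 2 ≤ i → P q i i = if q = 0 then 1 else 0
  succ : ∀ q i t : ℕ, 1 ≤ i → i ≤ t →
    P q i (t + 1) = ∑ j ∈ Finset.Icc 0 (min m q),
      (m.choose j : ℝ) * (((q : ℝ) - (j : ℝ) + A) / ((m + A) * t)) ^ j *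
        (1 - ((q : ℝ) - (j : ℝ) + A) / ((m + A) * t)) ^ (m - j) * P (q - j) i t

/-- Each of the `m` edges added at time `t + 1` attaches to a given node of degree `r` with
probability `attachProb m A t r`, so the node's degree gain is binomial, with the Bernstein
polynomial as mass function. -/
noncomputable def attachProb (m : ℕ) (A : ℝ) (t r : ℕ) : ℝ := (r + A) / ((m + A) * t)

noncomputable def gainProb (m : ℕ) (A : ℝ) (t r j : ℕ) : ℝ :=
  (bernsteinPolynomial ℝ m j).eval (attachProb m A t r)

section Kernel

variable {m : ℕ} {A : ℝ} {t r s : ℕ}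

lemma attachProb_eq_div : attachProb m A t r = (r + A) / (m + A) / t := by
  rw [attachProb, div_div]

lemma attachProb_nonneg (hA : 0 ≤ A) : 0 ≤ attachProb m A t r := by
  unfold attachProb; positivity

lemma attachProb_le_one (hA : 0 ≤ A) (ht : 1 ≤ t) (hr : r ≤ m * t) :
    attachProb m A t r ≤ 1 := by
  have hr' : (r : ℝ) ≤ m * t := by exact_mod_cast hr
  have ht' : (1 : ℝ) ≤ t := by exact_mod_cast ht
  refine div_le_one_of_le₀ ?_ (by positivity)
  nlinarith

lemma attachProb_mono (hA : 0 ≤ A) (h : r ≤ s) : attachProb m A t r ≤ attachProb m A t s := by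
  unfold attachProb
  gcongr

lemma gainProb_eq (j : ℕ) : gainProb m A t r j =
    m.choose j * attachProb m A t r ^ j * (1 - attachProb m A t r) ^ (m - j) := by
  simp [gainProb, bernsteinPolynomial]

lemma gainProb_zero : gainProb m A t r 0 = (1 - attachProb m A t r) ^ m := by
  simp [gainProb_eq]

lemma gainProb_one :
    gainProb m A t r 1 = m * attachProb m A t r * (1 - attachProb m A t r) ^ (m - 1) := by
  simp [gainProb_eq]

lemma gainProb_eq_zero_of_lt {j : ℕ} (h : m < j) : gainProb m A t r j = 0 := by
  simp [gainProb, bernsteinPolynomial.eq_zero_of_lt ℝ h]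

lemma sum_gainProb : ∑ j ∈ range (m + 1), gainProb m A t r j = 1 := by
  simp [gainProb, ← Polynomial.eval_finsetSum, bernsteinPolynomial.sum]

lemma gainProb_nonneg (hA : 0 ≤ A) (hx : attachProb m A t r ≤ 1) (j : ℕ) :
    0 ≤ gainProb m A t r j := by
  have := attachProb_nonneg (m := m) (t := t) (r := r) hA
  rw [gainProb_eq]
  exact mul_nonneg (mul_nonneg (by positivity) (by positivity)) (pow_nonneg (by linarith) _)

lemma gainProb_le_two_pow_mul_sq (hA : 0 ≤ A) {j : ℕ} (hx : attachProb m A t r ≤ 1)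
    (hj : 2 ≤ j) : gainProb m A t r j ≤ 2 ^ m * attachProb m A t r ^ 2 := by
  have hx₀ : 0 ≤ attachProb m A t r := attachProb_nonneg hA
  have hchoose : (m.choose j : ℝ) ≤ 2 ^ m := by exact_mod_cast Nat.choose_le_two_pow m j
  rw [gainProb_eq, ← mul_one (2 ^ m * attachProb m A t r ^ 2)]
  exact mul_le_mul (mul_le_mul hchoose (pow_le_pow_of_le_one hx₀ hx hj) (by positivity)
    (by positivity)) (pow_le_one₀ (by linarith) (by linarith)) (pow_nonneg (by linarith) _)
    (by positivity)

end Kernel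

noncomputable def netDegreeProb (P : ℕ → ℕ → ℕ → ℝ) (q t : ℕ) : ℝ :=
  (1 / (t : ℝ)) * ∑ i ∈ Icc 1 t, P q i t

namespace IsDMSDegreeProb

variable {m : ℕ} {A : ℝ} {P : ℕ → ℕ → ℕ → ℝ} {i t : ℕ}

lemma succ_eq_sum_gainProb (hP : IsDMSDegreeProb m A P) (hi : 1 ≤ i) (hit : i ≤ t)
    (q : ℕ) :
    P q i (t + 1) = ∑ j ∈ range (q + 1), gainProb m A t (q - j) j * P (q - j) i t := by
  have hsub : Icc 0 (min m q) ⊆ range (q + 1) := fun j hj => by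
    simp only [mem_Icc, mem_range] at hj ⊢; omega
  rw [hP.succ q i t hi hit, ← sum_subset hsub fun j _ hj => ?_]
  · refine sum_congr rfl fun j hj => ?_
    have hjq : j ≤ q := by simp only [mem_Icc] at hj; omega
    rw [gainProb_eq, attachProb, Nat.cast_sub hjq]
  · rw [gainProb_eq_zero_of_lt (by simp only [mem_Icc, mem_range] at *; omega), zero_mul]

lemma exists_birth_degree (hP : IsDMSDegreeProb m A P) (hi : 1 ≤ i) :
    ∃ d ≤ m * i, ∀ q, P q i i = if q = d then 1 else 0 := by
  obtain rfl | hi2 := eq_or_lt_of_le hi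
  · exact ⟨m, by simp, hP.first_node⟩
  · exact ⟨0, Nat.zero_le _, fun q => hP.new_node q i hi2⟩

lemma eq_zero_of_mul_lt (hP : IsDMSDegreeProb m A P) (hi : 1 ≤ i) (hit : i ≤ t) {q : ℕ}
    (hq : m * t < q) : P q i t = 0 := by
  induction t, hit using Nat.le_induction generalizing q with
  | base =>
    obtain ⟨d, hd, hself⟩ := hP.exists_birth_degree hi
    rw [hself, if_neg (by omega)]
  | succ t hit ih =>
    rw [hP.succ_eq_sum_gainProb hi hit]
    refine sum_eq_zero fun j hj => ?_
    rcases le_or_gt j m with hjm | hjm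
    · rw [ih (by rw [mem_range] at hj; rw [Nat.mul_succ] at hq; omega), mul_zero]
    · rw [gainProb_eq_zero_of_lt hjm, zero_mul]

lemma nonneg (hP : IsDMSDegreeProb m A P) (hA : 0 ≤ A) (hi : 1 ≤ i) (hit : i ≤ t) (q : ℕ) :
    0 ≤ P q i t := by
  induction t, hit using Nat.le_induction generalizing q with
  | base =>
    obtain ⟨d, -, hself⟩ := hP.exists_birth_degree hi
    rw [hself]; split_ifs <;> norm_num
  | succ t hit ih =>
    rw [hP.succ_eq_sum_gainProb hi hit]
    refine sum_nonneg fun j _ => ?_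
    rcases le_or_gt (q - j) (m * t) with hq | hq
    · exact mul_nonneg (gainProb_nonneg hA (attachProb_le_one hA (hi.trans hit) hq) j) (ih _)
    · rw [hP.eq_zero_of_mul_lt hi hit hq, mul_zero]

-- Swapping the sums, the mass at degree `r` is spread over the degrees `r + j` with binomial
-- weights, which sum to one.
lemma sum_range_eq_one (hP : IsDMSDegreeProb m A P) (hi : 1 ≤ i) (hit : i ≤ t) :
    ∑ r ∈ range (m * t + 1), P r i t = 1 := by
  induction t, hit using Nat.le_induction with
  | base =>
    obtain ⟨d, hd, hself⟩ := hP.exists_birth_degree hi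
    simp [hself, sum_ite_eq', Nat.lt_succ_of_le hd]
  | succ t hit ih =>
    have htrunc : ∀ j ∈ range (m * (t + 1) + 1),
        ∑ r ∈ range (m * (t + 1) + 1 - j), gainProb m A t r j * P r i t
          = ∑ r ∈ range (m * t + 1), gainProb m A t r j * P r i t := by
      intro j _
      rcases le_or_gt j m with hjm | hjm
      · refine (sum_subset (range_subset_range.2 (by rw [Nat.mul_succ]; omega)) ?_).symm
        intro r _ hr
        rw [hP.eq_zero_of_mul_lt hi hit (by simpa using hr), mul_zero]
      · simp [gainProb_eq_zero_of_lt hjm]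
    calc ∑ q ∈ range (m * (t + 1) + 1), P q i (t + 1)
        = ∑ j ∈ range (m * (t + 1) + 1), ∑ r ∈ range (m * (t + 1) + 1 - j),
            gainProb m A t r j * P r i t := by
          simp_rw [hP.succ_eq_sum_gainProb hi hit]
          exact sum_range_diag_flip _ fun j r => gainProb m A t r j * P r i t
      _ = ∑ r ∈ range (m * t + 1),
            (∑ j ∈ range (m * (t + 1) + 1), gainProb m A t r j) * P r i t := by
          rw [sum_congr rfl htrunc, sum_comm]
          simp_rw [sum_mul]
      _ = 1 := by
          have hsub : range (m + 1) ⊆ range (m * (t + 1) + 1) :=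
            range_subset_range.2 (by rw [Nat.mul_succ]; omega)
          rw [← ih]
          refine sum_congr rfl fun r _ => ?_
          rw [← sum_subset hsub fun j _ hj => gainProb_eq_zero_of_lt (by simpa using hj),
            sum_gainProb, one_mul]

lemma le_one (hP : IsDMSDegreeProb m A P) (hA : 0 ≤ A) (hi : 1 ≤ i) (hit : i ≤ t) (q : ℕ) :
    P q i t ≤ 1 := by
  rcases le_or_gt q (m * t) with hq | hq
  · rw [← hP.sum_range_eq_one hi hit]
    exact single_le_sum (fun r _ => hP.nonneg hA hi hit r) (mem_range.2 (Nat.lt_succ_of_le hq))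
  · rw [hP.eq_zero_of_mul_lt hi hit hq]; exact zero_le_one

lemma abs_succ_sub_le (hP : IsDMSDegreeProb m A P) (hA : 0 ≤ A) (hi : 1 ≤ i) (hit : i ≤ t)
    (q : ℕ) (hx : attachProb m A t (q + 1) ≤ 1) :
    |P (q + 1) i (t + 1) - ((1 - m * attachProb m A t (q + 1)) * P (q + 1) i t
        + m * attachProb m A t q * P q i t)|
      ≤ (2 * m ^ 2 + q * 2 ^ m) * attachProb m A t (q + 1) ^ 2 := by
  set x₀ := attachProb m A t (q + 1)
  set x₁ := attachProb m A t q
  have hx₀ : 0 ≤ x₀ := attachProb_nonneg hA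
  have hx₁ : 0 ≤ x₁ := attachProb_nonneg hA
  have hx₁₀ : x₁ ≤ x₀ := attachProb_mono hA q.le_succ
  have hPabs : ∀ r, |P r i t| ≤ 1 := fun r =>
    abs_le.2 ⟨by linarith [hP.nonneg hA hi hit r], hP.le_one hA hi hit r⟩
  have habs_mul : ∀ c r, |c * P r i t| ≤ |c| := fun c r => by
    rw [abs_mul]; exact mul_le_of_le_one_right (abs_nonneg c) (hPabs r)
  set R := ∑ j ∈ range q, gainProb m A t (q - (j + 1)) (j + 2) * P (q - (j + 1)) i t
  have hR : |R| ≤ q * 2 ^ m * x₀ ^ 2 := by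
    refine (abs_sum_le_sum_abs _ _).trans ((sum_le_card_nsmul _ _ (2 ^ m * x₀ ^ 2) ?_).trans ?_)
    · intro j _
      have hxj : attachProb m A t (q - (j + 1)) ≤ x₀ := attachProb_mono hA (by omega)
      refine (habs_mul _ _).trans ?_
      rw [abs_of_nonneg (gainProb_nonneg hA (hxj.trans hx) (j + 2))]
      calc gainProb m A t (q - (j + 1)) (j + 2) ≤ 2 ^ m * attachProb m A t (q - (j + 1)) ^ 2 :=
            gainProb_le_two_pow_mul_sq hA (hxj.trans hx) (by omega)
        _ ≤ 2 ^ m * x₀ ^ 2 := by gcongr; exact attachProb_nonneg hA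
    · simp [mul_assoc]
  have h₀ := (habs_mul ((1 - x₀) ^ m - (1 - m * x₀)) (q + 1)).trans
    (abs_one_sub_pow_sub_le hx₀ hx m)
  have h₁ := (habs_mul (m * x₁ * (1 - x₁) ^ (m - 1) - m * x₁) q).trans
    (abs_mul_one_sub_pow_sub_le hx₁ (hx₁₀.trans hx) m)
  have hsq : x₁ ^ 2 ≤ x₀ ^ 2 := by gcongr
  rw [hP.succ_eq_sum_gainProb hi hit, sum_range_succ', sum_range_succ', gainProb_one,
    gainProb_zero]
  calc _ = |((1 - x₀) ^ m - (1 - m * x₀)) * P (q + 1) i t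
          + (m * x₁ * (1 - x₁) ^ (m - 1) - m * x₁) * P q i t + R| := by
        simp only [R, x₀, x₁, Nat.add_sub_add_right, Nat.sub_zero, Nat.add_sub_cancel]
        ring_nf
    _ ≤ m ^ 2 * x₀ ^ 2 + m ^ 2 * x₁ ^ 2 + q * 2 ^ m * x₀ ^ 2 := by
        grw [abs_add_le, abs_add_le, h₀, h₁, hR]
    _ ≤ (2 * m ^ 2 + q * 2 ^ m) * x₀ ^ 2 := by nlinarith

lemma abs_sum_succ_sub_le (hP : IsDMSDegreeProb m A P) (hA : 0 ≤ A) (ht : 1 ≤ t) (q : ℕ)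
    (hx : attachProb m A t (q + 1) ≤ 1) :
    |∑ i ∈ Icc 1 (t + 1), P (q + 1) i (t + 1)
        - ((1 - m * attachProb m A t (q + 1)) * ∑ i ∈ Icc 1 t, P (q + 1) i t
          + m * attachProb m A t q * ∑ i ∈ Icc 1 t, P q i t)|
      ≤ t * ((2 * m ^ 2 + q * 2 ^ m) * attachProb m A t (q + 1) ^ 2) := by
  rw [sum_Icc_succ_top (by omega), hP.new_node _ _ (by omega), if_neg q.succ_ne_zero, add_zero,
    mul_sum, mul_sum, ← sum_add_distrib, ← sum_sub_distrib]
  refine (abs_sum_le_sum_abs _ _).trans ((sum_le_card_nsmul _ _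
    ((2 * m ^ 2 + q * 2 ^ m) * attachProb m A t (q + 1) ^ 2) fun i hi => ?_).trans ?_)
  · rw [mem_Icc] at hi
    exact hP.abs_succ_sub_le hA hi.1 hi.2 q hx
  · simp

lemma tendsto_netDegreeProb_recursion (hP : IsDMSDegreeProb m A P) (hA : 0 ≤ A) (q : ℕ) :
    Tendsto (fun t : ℕ => (t + 1) * netDegreeProb P (q + 1) (t + 1)
        - ((t - m * (q + 1 + A) / (m + A)) * netDegreeProb P (q + 1) t
          + m * (q + A) / (m + A) * netDegreeProb P q t)) atTop (𝓝 0) := by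
  have hx : ∀ᶠ t : ℕ in atTop, attachProb m A t (q + 1) ≤ 1 := by
    simp_rw [attachProb_eq_div]
    exact (tendsto_const_div_atTop_nhds_zero_nat _).eventually (eventually_le_nhds one_pos)
  refine squeeze_zero_norm' ?_ (tendsto_const_div_atTop_nhds_zero_nat
    ((2 * m ^ 2 + q * 2 ^ m) * (((q + 1 : ℕ) + A) / (m + A)) ^ 2))
  filter_upwards [hx, eventually_ge_atTop 1] with t hx ht
  have ht₀ : (t : ℝ) ≠ 0 := by positivity
  calc _ = |∑ i ∈ Icc 1 (t + 1), P (q + 1) i (t + 1)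
        - ((1 - m * attachProb m A t (q + 1)) * ∑ i ∈ Icc 1 t, P (q + 1) i t
          + m * attachProb m A t q * ∑ i ∈ Icc 1 t, P q i t)| := by
        rw [Real.norm_eq_abs, netDegreeProb, netDegreeProb, netDegreeProb, attachProb_eq_div,
          attachProb_eq_div]
        congr 1
        field_simp
        push_cast
        ring
    _ ≤ t * ((2 * m ^ 2 + q * 2 ^ m) * attachProb m A t (q + 1) ^ 2) :=
        hP.abs_sum_succ_sub_le hA ht q hx
    _ = (2 * m ^ 2 + q * 2 ^ m) * (((q + 1 : ℕ) + A) / (m + A)) ^ 2 / t := by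
        rw [attachProb_eq_div]
        field_simp

end IsDMSDegreeProb

theorem dms_degree_limit_recursion_general
    (m : ℕ) (A : ℝ) (hA : 0 < A)
    (P : ℕ → ℕ → ℕ → ℝ)
    (hP11 : ∀ q : ℕ, P q 1 1 = if q = m then 1 else 0)
    (hPii : ∀ q i : ℕ, 2 ≤ i → P q i i = if q = 0 then 1 else 0)
    (hPrec : ∀ q i t : ℕ, 1 ≤ i → i ≤ t →
      P q i (t + 1) = ∑ j ∈ Finset.Icc 0 (min m q),
        (m.choose j : ℝ) * (((q : ℝ) - (j : ℝ) + A) / ((m + A) * t)) ^ j *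
          (1 - ((q : ℝ) - (j : ℝ) + A) / ((m + A) * t)) ^ (m - j) * P (q - j) i t)
    (Pnet : ℕ → ℕ → ℝ)
    (hPnet : ∀ q t : ℕ, 1 ≤ t →
      Pnet q t = (1 / (t : ℝ)) * ∑ i ∈ Finset.Icc 1 t, P q i t)
    (q : ℕ) (hq : 1 ≤ q) (L : ℝ)
    (hL : Filter.Tendsto (fun t : ℕ => Pnet (q - 1) t) Filter.atTop (nhds L)) :
    Filter.Tendsto (fun t : ℕ => Pnet q t) Filter.atTop
      (nhds (((m : ℝ) * ((q : ℝ) + A - 1) / ((m : ℝ) * ((q : ℝ) + A + 1) + A)) * L)) := by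
  have hP : IsDMSDegreeProb m A P := ⟨hP11, hPii, hPrec⟩
  have hnet : ∀ r, netDegreeProb P r =ᶠ[atTop] Pnet r := fun r =>
    eventually_atTop.2 ⟨1, fun t ht => (hPnet r t ht).symm⟩
  obtain ⟨q, rfl⟩ := Nat.exists_eq_add_of_le' hq
  rw [Nat.add_sub_cancel] at hL
  have hrec := (hP.tendsto_netDegreeProb_recursion hA.le q).add
    ((hL.congr' (hnet q).symm).const_mul (m * (q + A) / (m + A)))
  have hlim := tendsto_of_tendsto_succ_mul_sub (a := m * (q + 1 + A) / (m + A))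
    (y := netDegreeProb P (q + 1)) (by positivity) (by convert hrec using 2; ring)
  convert hlim.congr' (hnet (q + 1)) using 2
  push_cast
  field_simp
  ring

/-- if `P(q-1,t)` converges, then `P(q,t)` converges to
`(m(q+A-1)/(m(q+A+1)+A))` times the former limit. -/
theorem dms_degree_limit_recursion
    (m : ℕ) (hm : 1 ≤ m) (A : ℝ) (hA : 0 < A)
    (P : ℕ → ℕ → ℕ → ℝ)
    (hP11 : ∀ q : ℕ, P q 1 1 = if q = m then 1 else 0)
    (hPii : ∀ q i : ℕ, 2 ≤ i → P q i i = if q = 0 then 1 else 0)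
    (hPrec : ∀ q i t : ℕ, 1 ≤ i → i ≤ t →
      P q i (t + 1) = ∑ j ∈ Finset.Icc 0 (min m q),
        (m.choose j : ℝ) * (((q : ℝ) - (j : ℝ) + A) / ((m + A) * t)) ^ j *
          (1 - ((q : ℝ) - (j : ℝ) + A) / ((m + A) * t)) ^ (m - j) * P (q - j) i t)
    (Pnet : ℕ → ℕ → ℝ)
    (hPnet : ∀ q t : ℕ, 1 ≤ t →
      Pnet q t = (1 / (t : ℝ)) * ∑ i ∈ Finset.Icc 1 t, P q i t)
    (q : ℕ) (hq : 1 ≤ q) (L : ℝ)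
    (hL : Filter.Tendsto (fun t : ℕ => Pnet (q - 1) t) Filter.atTop (nhds L)) :
    Filter.Tendsto (fun t : ℕ => Pnet q t) Filter.atTop
      (nhds (((m : ℝ) * ((q : ℝ) + A - 1) / ((m : ℝ) * ((q : ℝ) + A + 1) + A)) * L)) :=
  dms_degree_limit_recursion_general m A hA P hP11 hPii hPrec Pnet hPnet q hq L hL
end

section
/- If a sequence of reals (P(q))_{q≥0} satisfies P(0) = (m+A)/(m+A+mA) and the recursion P(q) = (m(q+A-1)/(m(q+A+1)+A)) · P(q-1) for all q ≥ 1, then for every q ≥ 0, P(q) = ((m+A)/m) · (Γ(A + A/m + 1)/Γ(A)) · Γ(q+A)/Γ(q + A + 2 + A/m), where Γ denotes the Gamma function. -/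
open Finset Filter Topology

/-- the recursion `P(q) = (m(q+A-1)/(m(q+A+1)+A)) P(q-1)` with
initial value `P(0) = (m+A)/(m+A+mA)` has the closed-form Gamma-function solution. -/
theorem dms_recursion_gamma_solution
    (m : ℕ) (hm : 1 ≤ m) (A : ℝ) (hA : 0 < A)
    (p : ℕ → ℝ)
    (h0 : p 0 = ((m : ℝ) + A) / ((m : ℝ) + A + (m : ℝ) * A))
    (hrec : ∀ q : ℕ, 1 ≤ q →
      p q = ((m : ℝ) * ((q : ℝ) + A - 1) / ((m : ℝ) * ((q : ℝ) + A + 1) + A)) * p (q - 1)) :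
    ∀ q : ℕ,
      p q = (((m : ℝ) + A) / (m : ℝ)) *
        (Real.Gamma (A + A / (m : ℝ) + 1) / Real.Gamma A) *
        (Real.Gamma ((q : ℝ) + A) / Real.Gamma ((q : ℝ) + A + 2 + A / (m : ℝ))) := by
  have hm0 : (0:ℝ) < (m:ℝ) := by exact_mod_cast Nat.pos_of_ne_zero (by omega)
  have hc : 0 < A / (m:ℝ) := div_pos hA hm0
  have hGA : Real.Gamma A ≠ 0 := (Real.Gamma_pos_of_pos hA).ne'
  have hGc : Real.Gamma (A + A / (m:ℝ)) ≠ 0 :=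
    (Real.Gamma_pos_of_pos (by positivity)).ne'
  intro q
  induction q with
  | zero =>
    have h1 : Real.Gamma (A + A / (m:ℝ) + 1)
        = (A + A / (m:ℝ)) * Real.Gamma (A + A / (m:ℝ)) :=
      Real.Gamma_add_one (by positivity)
    have h2 : Real.Gamma (A + 2 + A / (m:ℝ))
        = (A + A / (m:ℝ) + 1) * ((A + A / (m:ℝ)) * Real.Gamma (A + A / (m:ℝ))) := by
      rw [show A + 2 + A / (m:ℝ) = (A + A / (m:ℝ) + 1) + 1 by ring,
        Real.Gamma_add_one (by positivity), h1]
    have hden : (m:ℝ) + A + (m:ℝ) * A ≠ 0 := by positivity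
    simp only [Nat.cast_zero, zero_add] at *
    rw [h0, h1, h2]
    field_simp
    ring
  | succ q ih =>
    have hqA : (0:ℝ) < (q:ℝ) + A := by positivity
    have hG1 : Real.Gamma ((q:ℝ) + A) ≠ 0 := (Real.Gamma_pos_of_pos hqA).ne'
    have hG2 : Real.Gamma ((q:ℝ) + A + 2 + A / (m:ℝ)) ≠ 0 :=
      (Real.Gamma_pos_of_pos (by positivity)).ne'
    have g1 : Real.Gamma (((q:ℝ) + 1) + A) = ((q:ℝ) + A) * Real.Gamma ((q:ℝ) + A) := by
      rw [show (q:ℝ) + 1 + A = ((q:ℝ) + A) + 1 by ring, Real.Gamma_add_one hqA.ne']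
    have g2 : Real.Gamma (((q:ℝ) + 1) + A + 2 + A / (m:ℝ))
        = ((q:ℝ) + A + 2 + A / (m:ℝ)) * Real.Gamma ((q:ℝ) + A + 2 + A / (m:ℝ)) := by
      rw [show (q:ℝ) + 1 + A + 2 + A / (m:ℝ) = ((q:ℝ) + A + 2 + A / (m:ℝ)) + 1 by ring,
        Real.Gamma_add_one (by positivity)]
    have hrden : (m:ℝ) * ((q:ℝ) + 1 + A + 1) + A ≠ 0 := by positivity
    rw [hrec (q + 1) (by omega)]
    simp only [Nat.add_sub_cancel, Nat.cast_add, Nat.cast_one]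
    rw [ih, g1, g2]
    field_simp
    ring
end

section
/- In the special case A = m, for every q ≥ 0 the steady-state degree distribution exists and is given by lim_{t→∞} P(q,t) = 2m(m+1)/((q+m)(q+m+1)(q+m+2)); in particular q^3 · lim_{t→∞} P(q,t) → 2m(m+1) as q → ∞. -/
open Finset Filter Topology

/-!
Summing the recurrence over the vertices, the expected number `N q t` of vertices of degree `q`
satisfies `N q (t+1) = δ_{q0} + (1 - β/t)^m N q t + (terms in N (q-j) t, 1 ≤ j)` with
`β = (q+m)/(2m)`. By induction on `q`, `N (q-j) t = O(t)`, so the terms with `j ≥ 2` vanish and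
the `j = 1` term tends to `(q+m-1)/2 · p(q-1)`. As `t (1 - (1 - β/t)^m) → mβ = (q+m)/2`, the
recurrence has the form `u (t+1) = (1 - α/t + o(1/t)) u t + γ + o(1)`, which forces
`u t / t → γ/(1+α)`. The closed form `p` solves exactly this balance equation
`p q (1 + (q+m)/2) = δ_{q0} + (q+m-1)/2 · p(q-1)`.
-/

lemma tendsto_div_natCast_zero_of_abs_succ_le_s15 {v ε : ℕ → ℝ} (hε : Tendsto ε atTop (𝓝 0))
    (hv : ∀ᶠ t in atTop, |v (t + 1)| ≤ |v t| + |ε t|) :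
    Tendsto (fun t : ℕ => v t / t) atTop (𝓝 0) := by
  obtain ⟨t₀, ht₀⟩ := eventually_atTop.1 hv
  have hbound : ∀ t, t₀ ≤ t → |v t| ≤ |v t₀| + ∑ s ∈ range t, |ε s| := by
    refine Nat.le_induction ?_ fun t ht ih => ?_
    · exact le_add_of_nonneg_right (sum_nonneg fun _ _ => abs_nonneg _)
    · rw [sum_range_succ]
      linarith [ht₀ t ht]
  have habs : Tendsto (fun t => |ε t|) atTop (𝓝 0) := by simpa using hε.abs
  have hmajorant : Tendsto (fun t : ℕ => |v t₀| / t + (t : ℝ)⁻¹ * ∑ s ∈ range t, |ε s|)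
      atTop (𝓝 0) := by
    simpa using (tendsto_const_div_atTop_nhds_zero_nat _).add habs.cesaro
  refine squeeze_zero_norm' ?_ hmajorant
  filter_upwards [eventually_ge_atTop t₀] with t ht
  calc ‖v t / t‖ = |v t| / t := by rw [norm_div, Real.norm_eq_abs, Real.norm_natCast]
    _ ≤ (|v t₀| + ∑ s ∈ range t, |ε s|) / t := by gcongr; exact hbound t ht
    _ = _ := by ring

/-- With `v t = u t - c t` the recurrence becomes `v (t+1) = a t * v t + o(1)`. -/
lemma tendsto_div_natCast_of_recurrence {u a f : ℕ → ℝ} {α γ c : ℝ}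
    (hu : ∀ᶠ t in atTop, u (t + 1) = a t * u t + f t) (ha : ∀ᶠ t in atTop, |a t| ≤ 1)
    (hα : Tendsto (fun t : ℕ => t * (1 - a t)) atTop (𝓝 α)) (hf : Tendsto f atTop (𝓝 γ))
    (hc : c * (1 + α) = γ) :
    Tendsto (fun t : ℕ => u t / t) atTop (𝓝 c) := by
  set v : ℕ → ℝ := fun t => u t - c * t
  set ε : ℕ → ℝ := fun t => f t - c - c * (t * (1 - a t))
  have hε : Tendsto ε atTop (𝓝 0) := by
    simpa [← hc, mul_add] using (hf.sub_const c).sub (hα.const_mul c)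
  have hv : ∀ᶠ t in atTop, |v (t + 1)| ≤ |v t| + |ε t| := by
    filter_upwards [hu, ha] with t hut hat
    have hvt : v (t + 1) = a t * v t + ε t := by
      simp only [v, ε, hut]; push_cast; ring
    grw [hvt, abs_add_le, abs_mul, hat, one_mul]
  have := (tendsto_div_natCast_zero_of_abs_succ_le_s15 hε hv).add_const c
  rw [zero_add] at this
  refine this.congr' ?_
  filter_upwards [eventually_gt_atTop 0] with t ht
  field_simp
  ring

lemma tendsto_mul_one_sub_one_sub_div_pow (β : ℝ) (m : ℕ) :
    Tendsto (fun t : ℕ => t * (1 - (1 - β / t) ^ m)) atTop (𝓝 (m * β)) := by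
  have hsum : Tendsto (fun t : ℕ => ∑ i ∈ range m, (1 - β / t) ^ i) atTop (𝓝 m) := by
    simpa using tendsto_finsetSum (range m) fun i _ =>
      ((tendsto_const_div_atTop_nhds_zero_nat β).const_sub 1).pow i
  refine (hsum.mul_const β).congr' ?_
  filter_upwards [eventually_gt_atTop 0] with t ht
  rw [← mul_neg_geom_sum, sub_sub_cancel]
  field_simp

lemma eventually_abs_one_sub_div_pow_le_one {β : ℝ} (hβ : 0 ≤ β) (m : ℕ) :
    ∀ᶠ t : ℕ in atTop, |(1 - β / t) ^ m| ≤ 1 := by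
  filter_upwards [tendsto_natCast_atTop_atTop.eventually_ge_atTop β] with t hβt
  have h₀ : 0 ≤ β / t := div_nonneg hβ (Nat.cast_nonneg t)
  have h₁ : β / t ≤ 1 := div_le_one_of_le₀ hβt (Nat.cast_nonneg t)
  rw [abs_pow]
  exact pow_le_one₀ (abs_nonneg _) (abs_le.2 ⟨by linarith, by linarith⟩)

lemma tendsto_div_pow_mul_one_sub_div_pow_mul {v : ℕ → ℝ} {L : ℝ}
    (hv : Tendsto (fun t : ℕ => v t / t) atTop (𝓝 L)) (c : ℝ) {j : ℕ} (hj : j ≠ 0) (k : ℕ) :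
    Tendsto (fun t : ℕ => (c / t) ^ j * (1 - c / t) ^ k * v t) atTop
      (𝓝 (c ^ j * 0 ^ (j - 1) * L)) := by
  have h := (((tendsto_inv_atTop_nhds_zero_nat (𝕜 := ℝ)).pow (j - 1)).const_mul (c ^ j)).mul
    ((((tendsto_const_div_atTop_nhds_zero_nat c).const_sub 1).pow k).mul hv)
  simp only [sub_zero, one_pow, one_mul] at h
  refine h.congr' ?_
  filter_upwards [eventually_gt_atTop 0] with t ht
  obtain ⟨i, rfl⟩ := Nat.exists_eq_add_of_le' (Nat.pos_of_ne_zero hj)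
  rw [Nat.add_sub_cancel, div_pow, pow_succ, pow_succ, inv_pow]
  field_simp

def DMSRecurrence (m : ℕ) (P : ℕ → ℕ → ℕ → ℝ) : Prop :=
  ∀ q i t : ℕ, 1 ≤ i → i ≤ t →
    P q i (t + 1) = ∑ j ∈ Icc 0 (min m q),
      (m.choose j : ℝ) * (((q : ℝ) - (j : ℝ) + (m : ℝ)) / (((m : ℝ) + (m : ℝ)) * t)) ^ j *
        (1 - ((q : ℝ) - (j : ℝ) + (m : ℝ)) / (((m : ℝ) + (m : ℝ)) * t)) ^ (m - j) *
        P (q - j) i t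

def degreeCount (P : ℕ → ℕ → ℕ → ℝ) (q t : ℕ) : ℝ := ∑ i ∈ Icc 1 t, P q i t

noncomputable def steadyState (m q : ℕ) : ℝ :=
  2 * (m : ℝ) * ((m : ℝ) + 1) / (((q : ℝ) + m) * ((q : ℝ) + m + 1) * ((q : ℝ) + m + 2))

lemma steadyState_zero_mul {m : ℕ} (hm : m ≠ 0) : steadyState m 0 * (1 + m / 2) = 1 := by
  have : (m : ℝ) ≠ 0 := by exact_mod_cast hm
  unfold steadyState
  field_simp
  ring

lemma steadyState_succ_mul {m : ℕ} (hm : m ≠ 0) (q : ℕ) :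
    steadyState m (q + 1) * (1 + (q + 1 + m) / 2) = (q + m) / 2 * steadyState m q := by
  have : (q : ℝ) + m ≠ 0 := by positivity
  unfold steadyState
  push_cast
  field_simp
  ring

lemma tendsto_pow_three_mul_steadyState (m : ℕ) :
    Tendsto (fun q : ℕ => (q : ℝ) ^ 3 * steadyState m q) atTop
      (𝓝 (2 * (m : ℝ) * ((m : ℝ) + 1))) := by
  have h := (((tendsto_natCast_div_add_atTop (m : ℝ)).mul
    (tendsto_natCast_div_add_atTop ((m : ℝ) + 1))).mul
    (tendsto_natCast_div_add_atTop ((m : ℝ) + 2))).const_mul (2 * (m : ℝ) * ((m : ℝ) + 1))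
  rw [mul_one, mul_one, mul_one] at h
  refine h.congr' ?_
  filter_upwards [eventually_gt_atTop 0] with q hq
  have : (q : ℝ) + m ≠ 0 := by positivity
  unfold steadyState
  field_simp
  ring

section DMS

variable {m : ℕ} {P : ℕ → ℕ → ℕ → ℝ}

lemma degreeCount_succ (hPii : ∀ q i : ℕ, 2 ≤ i → P q i i = if q = 0 then 1 else 0)
    (hPrec : DMSRecurrence m P) {q t : ℕ} (ht : 1 ≤ t) :
    degreeCount P q (t + 1) = (if q = 0 then 1 else 0) + ∑ j ∈ Icc 0 (min m q),
      (m.choose j : ℝ) * (((q - j + m : ℝ) / (m + m)) / t) ^ j *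
        (1 - ((q - j + m : ℝ) / (m + m)) / t) ^ (m - j) * degreeCount P (q - j) t := by
  rw [degreeCount, sum_Icc_succ_top (by omega), hPii q (t + 1) (by omega), add_comm]
  congr 1
  rw [sum_congr rfl fun i hi => hPrec q i t (mem_Icc.1 hi).1 (mem_Icc.1 hi).2, sum_comm]
  simp only [degreeCount, mul_sum, div_mul_eq_div_div]

theorem tendsto_degreeCount_div (hm : m ≠ 0)
    (hPii : ∀ q i : ℕ, 2 ≤ i → P q i i = if q = 0 then 1 else 0)
    (hPrec : DMSRecurrence m P) (q : ℕ) :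
    Tendsto (fun t : ℕ => degreeCount P q t / t) atTop (𝓝 (steadyState m q)) := by
  induction q using Nat.strong_induction_on with
  | _ q ih =>
  set c : ℕ → ℝ := fun j => ((q : ℝ) - j + m) / (m + m)
  refine tendsto_div_natCast_of_recurrence (a := fun t => (1 - c 0 / t) ^ m)
    (f := fun t => (if q = 0 then 1 else 0) + ∑ j ∈ Ioc 0 (min m q),
      (m.choose j : ℝ) * ((c j / t) ^ j * (1 - c j / t) ^ (m - j) * degreeCount P (q - j) t))
    (γ := (if q = 0 then 1 else 0) + ∑ j ∈ Ioc 0 (min m q),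
      (m.choose j : ℝ) * (c j ^ j * 0 ^ (j - 1) * steadyState m (q - j)))
    ?_ (eventually_abs_one_sub_div_pow_le_one ?_ m) (tendsto_mul_one_sub_one_sub_div_pow (c 0) m)
    ?_ ?_
  · filter_upwards [eventually_ge_atTop 1] with t ht
    rw [degreeCount_succ hPii hPrec ht, ← add_sum_Ioc_eq_sum_Icc (Nat.zero_le _)]
    simp only [Nat.choose_zero_right, Nat.cast_one, CharP.cast_eq_zero, sub_zero, pow_zero,
      mul_one, tsub_zero, one_mul, mul_assoc, c]
    ring
  · simp only [c, Nat.cast_zero, sub_zero]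
    positivity
  · refine tendsto_const_nhds.add (tendsto_finsetSum _ fun j hj => Tendsto.const_mul _ ?_)
    have hj := mem_Ioc.1 hj
    exact tendsto_div_pow_mul_one_sub_div_pow_mul (ih (q - j) (by omega)) _ (by omega) _
  · have hmc : (m : ℝ) * c 0 = (q + m) / 2 := by
      have : (m : ℝ) ≠ 0 := by exact_mod_cast hm
      simp only [c]
      field_simp
      ring
    rw [hmc]
    cases q with
    | zero => simpa using steadyState_zero_mul hm
    | succ q =>
      rw [sum_eq_single 1]
      · simp only [c, Nat.cast_add, Nat.cast_one, Nat.choose_one_right, add_sub_cancel_right,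
          pow_one, tsub_self, pow_zero, mul_one, add_tsub_cancel_right, Nat.add_eq_zero_iff,
          one_ne_zero, and_false, if_false, zero_add]
        rw [steadyState_succ_mul hm]
        have : (m : ℝ) ≠ 0 := by exact_mod_cast hm
        field_simp
        ring
      · intro j hj hj1
        have := (mem_Ioc.1 hj).1
        rw [zero_pow (by omega : j - 1 ≠ 0)]
        simp
      · intro h
        exact (h (mem_Ioc.2 ⟨one_pos, by omega⟩)).elim

end DMS

theorem dms_steady_state_A_eq_m_general
    (m : ℕ) (hm : 1 ≤ m)
    (P : ℕ → ℕ → ℕ → ℝ)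
    (hPii : ∀ q i : ℕ, 2 ≤ i → P q i i = if q = 0 then 1 else 0)
    (hPrec : ∀ q i t : ℕ, 1 ≤ i → i ≤ t →
      P q i (t + 1) = ∑ j ∈ Finset.Icc 0 (min m q),
        (m.choose j : ℝ) * (((q : ℝ) - (j : ℝ) + (m : ℝ)) / (((m : ℝ) + (m : ℝ)) * t)) ^ j *
          (1 - ((q : ℝ) - (j : ℝ) + (m : ℝ)) / (((m : ℝ) + (m : ℝ)) * t)) ^ (m - j) *
          P (q - j) i t)
    (Pnet : ℕ → ℕ → ℝ)
    (hPnet : ∀ q t : ℕ, 1 ≤ t →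
      Pnet q t = (1 / (t : ℝ)) * ∑ i ∈ Finset.Icc 1 t, P q i t) :
    (∀ q : ℕ,
      Filter.Tendsto (fun t : ℕ => Pnet q t) Filter.atTop
        (nhds (2 * (m : ℝ) * ((m : ℝ) + 1) /
          (((q : ℝ) + m) * ((q : ℝ) + m + 1) * ((q : ℝ) + m + 2))))) ∧
    Filter.Tendsto
      (fun q : ℕ => (q : ℝ) ^ 3 *
        (2 * (m : ℝ) * ((m : ℝ) + 1) /
          (((q : ℝ) + m) * ((q : ℝ) + m + 1) * ((q : ℝ) + m + 2))))
      Filter.atTop (nhds (2 * (m : ℝ) * ((m : ℝ) + 1))) := by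
  refine ⟨fun q => ?_, tendsto_pow_three_mul_steadyState m⟩
  refine (tendsto_degreeCount_div (by omega) hPii hPrec q).congr' ?_
  filter_upwards [eventually_ge_atTop 1] with t ht
  rw [hPnet q t ht, degreeCount, one_div, inv_mul_eq_div]

/-- in the special case `A = m`, the steady-state degree distribution
exists and equals `2m(m+1)/((q+m)(q+m+1)(q+m+2))`, which decays like `2m(m+1) q⁻³`. -/
theorem dms_steady_state_A_eq_m
    (m : ℕ) (hm : 1 ≤ m)
    (P : ℕ → ℕ → ℕ → ℝ)
    (hP11 : ∀ q : ℕ, P q 1 1 = if q = m then 1 else 0)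
    (hPii : ∀ q i : ℕ, 2 ≤ i → P q i i = if q = 0 then 1 else 0)
    (hPrec : ∀ q i t : ℕ, 1 ≤ i → i ≤ t →
      P q i (t + 1) = ∑ j ∈ Finset.Icc 0 (min m q),
        (m.choose j : ℝ) * (((q : ℝ) - (j : ℝ) + (m : ℝ)) / (((m : ℝ) + (m : ℝ)) * t)) ^ j *
          (1 - ((q : ℝ) - (j : ℝ) + (m : ℝ)) / (((m : ℝ) + (m : ℝ)) * t)) ^ (m - j) *
          P (q - j) i t)
    (Pnet : ℕ → ℕ → ℝ)
    (hPnet : ∀ q t : ℕ, 1 ≤ t →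
      Pnet q t = (1 / (t : ℝ)) * ∑ i ∈ Finset.Icc 1 t, P q i t) :
    (∀ q : ℕ,
      Filter.Tendsto (fun t : ℕ => Pnet q t) Filter.atTop
        (nhds (2 * (m : ℝ) * ((m : ℝ) + 1) /
          (((q : ℝ) + m) * ((q : ℝ) + m + 1) * ((q : ℝ) + m + 2))))) ∧
    Filter.Tendsto
      (fun q : ℕ => (q : ℝ) ^ 3 *
        (2 * (m : ℝ) * ((m : ℝ) + 1) /
          (((q : ℝ) + m) * ((q : ℝ) + m + 1) * ((q : ℝ) + m + 2))))
      Filter.atTop (nhds (2 * (m : ℝ) * ((m : ℝ) + 1))) :=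
  dms_steady_state_A_eq_m_general m hm P hPii hPrec Pnet hPnet
end
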